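/- arXiv:2406.14302 — 7 statements merged into one kernel-verified Lean document; each statement's English description precedes it below -/
import Mathlib

section
/- Markov property under cause variability: Suppose the quadruple (X¹, Y¹, X², Y²) admits a cause-variability X→Y representation. Then Y¹ is conditionally independent of X² given X¹, and Y² is conditionally independent of X¹ given X². -/
open MeasureTheory ProbabilityTheory

/-- `A` is conditionally independent of `B` given `C`: conditional independence of the
σ-algebras generated by `A` and `B` given the σ-algebra generated by `C`. -/
def CondIndepRV {Ω β γ δ : Type*} [MeasurableSpace Ω] [StandardBorelSpace Ω]
    [MeasurableSpace β] [MeasurableSpace γ] [MeasurableSpace δ]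
    (P : Measure Ω) [IsFiniteMeasure P]
    (A : Ω → β) (B : Ω → γ) (C : Ω → δ) (hC : Measurable C) : Prop :=
  ProbabilityTheory.CondIndepFun (MeasurableSpace.comap C inferInstance) hC.comap_le A B P

/-- Joint law on `E × F` of a pair whose first component has law `m` and whose conditional
law of the second component given that the first equals `x` is `b x`. -/
noncomputable def jointXY {E F : Type*} [MeasurableSpace E] [MeasurableSpace F]
    (m : Measure E) (b : E → Measure F) : Measure (E × F) :=
  m.bind fun x => (b x).map fun y => (x, y)

/-- Joint law on `E × F` of a pair whose *second* component has law `m` and whose conditional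
law of the first component given that the second equals `y` is `a y`. -/
noncomputable def jointYX {E F : Type*} [MeasurableSpace E] [MeasurableSpace F]
    (m : Measure F) (a : F → Measure E) : Measure (E × F) :=
  m.bind fun y => (a y).map fun x => (x, y)

/-- Law of the quadruple `((X¹,Y¹),(X²,Y²))`. -/
noncomputable def quadLaw {Ω E F : Type*} [MeasurableSpace Ω] [MeasurableSpace E]
    [MeasurableSpace F] (P : Measure Ω)
    (X1 : Ω → E) (Y1 : Ω → F) (X2 : Ω → E) (Y2 : Ω → F) :
    Measure ((E × F) × (E × F)) :=
  P.map fun ω => ((X1 ω, Y1 ω), (X2 ω, Y2 ω))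

/-- Cause-variability `X → Y` representation: a mixture over `θ ~ μ` of laws under which
`(X¹,Y¹)` and `(X²,Y²)` are i.i.d. with `Xⁱ ~ α θ` and `Yⁱ | Xⁱ = x ~ β x`. -/
def HasCauseVarRep {Ω E F : Type*} [MeasurableSpace Ω] [MeasurableSpace E] [MeasurableSpace F]
    (P : Measure Ω) (X1 : Ω → E) (Y1 : Ω → F) (X2 : Ω → E) (Y2 : Ω → F) : Prop :=
  ∃ (T : Type) (_ : MeasurableSpace T) (μ : Measure T) (_ : IsProbabilityMeasure μ)
    (α : Kernel T E) (_ : IsMarkovKernel α) (β : Kernel E F) (_ : IsMarkovKernel β),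
    quadLaw P X1 Y1 X2 Y2 =
      μ.bind fun θ => (jointXY (α θ) fun x => β x).prod (jointXY (α θ) fun x => β x)

/-- Mechanism-variability `X → Y` representation: a mixture over `ψ ~ ν` of laws under which
`(X¹,Y¹)` and `(X²,Y²)` are i.i.d. with `Xⁱ ~ π` and `Yⁱ | Xⁱ = x ~ β (ψ, x)`. -/
def HasMechVarRep {Ω E F : Type*} [MeasurableSpace Ω] [MeasurableSpace E] [MeasurableSpace F]
    (P : Measure Ω) (X1 : Ω → E) (Y1 : Ω → F) (X2 : Ω → E) (Y2 : Ω → F) : Prop :=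
  ∃ (Ψ : Type) (_ : MeasurableSpace Ψ) (ν : Measure Ψ) (_ : IsProbabilityMeasure ν)
    (π : Measure E) (_ : IsProbabilityMeasure π)
    (β : Kernel (Ψ × E) F) (_ : IsMarkovKernel β),
    quadLaw P X1 Y1 X2 Y2 =
      ν.bind fun ψ =>
        (jointXY π fun x => β (ψ, x)).prod (jointXY π fun x => β (ψ, x))

/-- Reverse-direction `Y → X` representation: a mixture over `(θ, ψ) ~ μ ⊗ ν` of laws under
which `(Y¹,X¹)` and `(Y²,X²)` are i.i.d. with `Yⁱ ~ β ψ` and `Xⁱ | Yⁱ = y ~ α (θ, y)`. -/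
def HasRevRep {Ω E F : Type*} [MeasurableSpace Ω] [MeasurableSpace E] [MeasurableSpace F]
    (P : Measure Ω) (X1 : Ω → E) (Y1 : Ω → F) (X2 : Ω → E) (Y2 : Ω → F) : Prop :=
  ∃ (T : Type) (_ : MeasurableSpace T) (Ψ : Type) (_ : MeasurableSpace Ψ)
    (μ : Measure T) (_ : IsProbabilityMeasure μ) (ν : Measure Ψ) (_ : IsProbabilityMeasure ν)
    (β : Kernel Ψ F) (_ : IsMarkovKernel β) (α : Kernel (T × F) E) (_ : IsMarkovKernel α),
    quadLaw P X1 Y1 X2 Y2 =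
      (μ.prod ν).bind fun p =>
        (jointYX (β p.2) fun y => α (p.1, y)).prod (jointYX (β p.2) fun y => α (p.1, y))

/-!
Under each fixed `θ` the pairs `(X¹, Y¹)` and `(X², Y²)` are independent and `Y¹ | X¹ = x ~ β x`,
so the conditional law of `Y¹` given `(X¹, (X², Y²))` is `β X¹`. This kernel does not involve `θ`,
hence it is still the conditional law of `Y¹` given `(X¹, (X², Y²))` after mixing over `θ`, and a
conditional law given `(X, Z)` that depends on `X` alone means independence of `Z` given `X`. The
second claim is the first one for the swapped pairs, whose law has the same representation.
-/

open scoped ENNReal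

lemma jointXY_eq_comp {E F : Type*} [MeasurableSpace E] [MeasurableSpace F]
    (m : Measure E) (β : Kernel E F) [IsSFiniteKernel β] :
    jointXY m (fun x => β x) = (Kernel.id ×ₖ β) ∘ₘ m := by
  refine congrArg m.bind (funext fun x => ?_)
  rw [Kernel.prod_apply, Kernel.id_apply, Measure.dirac_prod]

lemma setLIntegral_prod_fst {α γ : Type*} [MeasurableSpace α] [MeasurableSpace γ]
    (μ : Measure α) [SFinite μ] (ν : Measure γ) [SFinite ν] {f : α → ℝ≥0∞} (hf : Measurable f)
    (s : Set α) (t : Set γ) :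
    ∫⁻ p in s ×ˢ t, f p.1 ∂μ.prod ν = (∫⁻ a in s, f a ∂μ) * ν t := by
  simpa [Measure.prod_restrict] using lintegral_prod_mul (μ := μ.restrict s) (ν := ν.restrict t)
    hf.aemeasurable (aemeasurable_const (b := (1 : ℝ≥0∞)))

lemma map_compProd_prod_eq_compProd_prodMkRight {α β γ : Type*} [MeasurableSpace α] [MeasurableSpace β]
    [MeasurableSpace γ] (μ : Measure α) [IsFiniteMeasure μ] (κ : Kernel α β) [IsFiniteKernel κ]
    (ν : Measure γ) [IsFiniteMeasure ν] :
    ((μ ⊗ₘ κ).prod ν).map (fun p => ((p.1.1, p.2), p.1.2)) = (μ.prod ν) ⊗ₘ κ.prodMkRight γ := by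
  have hr : Measurable fun p : (α × β) × γ => ((p.1.1, p.2), p.1.2) := by fun_prop
  refine Measure.ext_prod₃_iff'.2 fun {s t u} hs ht hu => ?_
  have hpre : (fun p : (α × β) × γ => ((p.1.1, p.2), p.1.2)) ⁻¹' ((s ×ˢ t) ×ˢ u)
      = (s ×ˢ u) ×ˢ t := by
    ext p; simp only [Set.mem_preimage, Set.mem_prod]; tauto
  rw [Measure.map_apply hr ((hs.prod ht).prod hu), hpre, Measure.prod_prod,
    Measure.compProd_apply_prod hs hu, Measure.compProd_apply_prod (hs.prod ht) hu]
  exact (setLIntegral_prod_fst μ ν (κ.measurable_coe hu) s t).symm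

lemma map_compProd_prodMkRight {α β γ : Type*} [MeasurableSpace α] [MeasurableSpace β]
    [MeasurableSpace γ] (ν : Measure (α × γ)) [SFinite ν] (κ : Kernel α β) [IsSFiniteKernel κ] :
    (ν ⊗ₘ κ.prodMkRight γ).map (fun p => (p.1.1, p.2)) = ν.map Prod.fst ⊗ₘ κ := by
  ext s hs
  have hf : Measurable fun p : (α × γ) × β => (p.1.1, p.2) := by fun_prop
  rw [Measure.map_apply hf hs, Measure.compProd_apply (hf hs), Measure.compProd_apply hs,
    lintegral_map (Kernel.measurable_kernel_prodMk_left hs) measurable_fst]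
  rfl

theorem condIndepFun_of_map_eq_compProd_prodMkRight {Ω α β γ : Type*} [MeasurableSpace Ω]
    [StandardBorelSpace Ω] [MeasurableSpace α] [MeasurableSpace β] [StandardBorelSpace β]
    [Nonempty β] [MeasurableSpace γ] [StandardBorelSpace γ] [Nonempty γ]
    {P : Measure Ω} [IsFiniteMeasure P] {X : Ω → α} {Y : Ω → β} {Z : Ω → γ}
    (hX : Measurable X) (hY : Measurable Y) (hZ : Measurable Z) {κ : Kernel α β} [IsFiniteKernel κ]
    (h : P.map (fun ω => ((X ω, Z ω), Y ω)) = P.map (fun ω => (X ω, Z ω)) ⊗ₘ κ.prodMkRight γ) :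
    Y ⟂ᵢ[X, hX; P] Z := by
  have hXZ : Measurable fun ω => (X ω, Z ω) := hX.prodMk hZ
  have hcond_XZ : condDistrib Y (fun ω => (X ω, Z ω)) P
      =ᵐ[P.map fun ω => (X ω, Z ω)] κ.prodMkRight γ :=
    condDistrib_ae_eq_of_measure_eq_compProd _ hY.aemeasurable h
  have hcond_X : condDistrib Y X P =ᵐ[P.map X] κ := by
    refine condDistrib_ae_eq_of_measure_eq_compProd X hY.aemeasurable ?_
    have h_marg := congrArg (Measure.map fun p => (p.1.1, p.2)) h
    rwa [Measure.map_map (by fun_prop) (by fun_prop), map_compProd_prodMkRight,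
      Measure.map_map measurable_fst hXZ] at h_marg
  have hcond_X' : ∀ᵐ p ∂(P.map fun ω => (X ω, Z ω)), condDistrib Y X P p.1 = κ p.1 := by
    rw [← Measure.fst_map_prodMk hZ, Measure.fst] at hcond_X
    exact ae_of_ae_map measurable_fst.aemeasurable hcond_X
  refine ((condIndepFun_iff_condDistrib_prod_ae_eq_prodMkRight hY hZ hX).2 ?_).symm
  filter_upwards [hcond_XZ, hcond_X'] with p h1 h2
  rw [h1, Kernel.prodMkRight_apply, Kernel.prodMkRight_apply, h2]

lemma condIndepRV_of_quadLaw_eq_comp {Ω E F T : Type*} [MeasurableSpace Ω] [StandardBorelSpace Ω]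
    [MeasurableSpace E] [StandardBorelSpace E] [MeasurableSpace F] [StandardBorelSpace F]
    [MeasurableSpace T] {P : Measure Ω} [IsProbabilityMeasure P]
    {X1 X2 : Ω → E} {Y1 Y2 : Ω → F}
    (hX1 : Measurable X1) (hY1 : Measurable Y1) (hX2 : Measurable X2) (hY2 : Measurable Y2)
    {μ : Measure T} [IsFiniteMeasure μ] {α : Kernel T E} [IsMarkovKernel α]
    {β : Kernel E F} [IsMarkovKernel β] {η : Kernel T (E × F)} [IsFiniteKernel η]
    (h : quadLaw P X1 Y1 X2 Y2 = (((Kernel.id ×ₖ β) ∘ₖ α) ×ₖ η) ∘ₘ μ) :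
    CondIndepRV P Y1 X2 X1 hX1 := by
  have : Nonempty Ω := nonempty_of_isProbabilityMeasure P
  have : Nonempty E := ⟨X1 (Classical.arbitrary Ω)⟩
  have : Nonempty F := ⟨Y1 (Classical.arbitrary Ω)⟩
  have hquad : Measurable fun ω => ((X1 ω, Y1 ω), (X2 ω, Y2 ω)) := by fun_prop
  have hr : Measurable fun p : (E × F) × (E × F) => ((p.1.1, p.2), p.1.2) := by fun_prop
  have hs : Measurable fun p : (E × F) × (E × F) => (p.1.1, p.2) := by fun_prop
  have hlaw_r : (((Kernel.id ×ₖ β) ∘ₖ α) ×ₖ η).map (fun p => ((p.1.1, p.2), p.1.2))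
      = (Kernel.id ×ₖ β.prodMkRight (E × F)) ∘ₖ (α ×ₖ η) := by
    ext1 θ
    rw [Kernel.map_apply _ hr, Kernel.prod_apply, Kernel.comp_apply, Kernel.comp_apply,
      Kernel.prod_apply, ← Measure.compProd_eq_comp_prod, ← Measure.compProd_eq_comp_prod,
      map_compProd_prod_eq_compProd_prodMkRight]
  have hlaw_s : (((Kernel.id ×ₖ β) ∘ₖ α) ×ₖ η).map (fun p => (p.1.1, p.2)) = α ×ₖ η := by
    ext1 θ
    rw [Kernel.map_apply _ hs, Kernel.prod_apply, Kernel.prod_apply, Kernel.comp_apply,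
      ← Measure.compProd_eq_comp_prod]
    change ((α θ ⊗ₘ β).prod (η θ)).map (Prod.map Prod.fst id) = _
    rw [← Measure.map_prod_map _ _ measurable_fst measurable_id, Measure.map_id, ← Measure.fst,
      Measure.fst_compProd]
  refine (condIndepFun_of_map_eq_compProd_prodMkRight hX1 hY1 (hX2.prodMk hY2)
    (κ := β) ?_).comp measurable_id measurable_fst
  have hmap : ∀ {G : Type _} [MeasurableSpace G] (f : (E × F) × (E × F) → G), Measurable f →
      P.map (fun ω => f ((X1 ω, Y1 ω), (X2 ω, Y2 ω))) = (quadLaw P X1 Y1 X2 Y2).map f :=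
    fun f hf => (Measure.map_map hf hquad).symm
  rw [hmap _ hr, hmap _ hs, h, Measure.map_comp _ _ hr, Measure.map_comp _ _ hs, hlaw_r, hlaw_s,
    Measure.compProd_eq_comp_prod, Measure.comp_assoc]

lemma quadLaw_swap {Ω E F : Type*} [MeasurableSpace Ω] [MeasurableSpace E] [MeasurableSpace F]
    (P : Measure Ω) {X1 X2 : Ω → E} {Y1 Y2 : Ω → F}
    (hX1 : Measurable X1) (hY1 : Measurable Y1) (hX2 : Measurable X2) (hY2 : Measurable Y2) :
    quadLaw P X2 Y2 X1 Y1 = (quadLaw P X1 Y1 X2 Y2).map Prod.swap := by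
  rw [quadLaw, quadLaw, Measure.map_map measurable_swap (by fun_prop)]
  rfl

/-- **Markov property under cause variability.** If the quadruple `(X¹, Y¹, X², Y²)` admits a
cause-variability `X → Y` representation, then `Y¹ ⫫ X² | X¹` and `Y² ⫫ X¹ | X²`. -/
theorem markov_of_causeVarRep {Ω E F : Type*} [MeasurableSpace Ω] [StandardBorelSpace Ω]
    [MeasurableSpace E] [StandardBorelSpace E] [MeasurableSpace F] [StandardBorelSpace F]
    (P : Measure Ω) [IsProbabilityMeasure P]
    (X1 X2 : Ω → E) (Y1 Y2 : Ω → F)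
    (hX1 : Measurable X1) (hY1 : Measurable Y1) (hX2 : Measurable X2) (hY2 : Measurable Y2)
    (hrep : HasCauseVarRep P X1 Y1 X2 Y2) :
    CondIndepRV P Y1 X2 X1 hX1 ∧ CondIndepRV P Y2 X1 X2 hX2 := by
  obtain ⟨T, _, μ, _, α, _, β, _, hq⟩ := hrep
  set η : Kernel T (E × F) := (Kernel.id ×ₖ β) ∘ₖ α
  have h12 : quadLaw P X1 Y1 X2 Y2 = (η ×ₖ η) ∘ₘ μ := by
    rw [hq]
    refine congrArg μ.bind (funext fun θ => ?_)
    rw [Kernel.prod_apply, jointXY_eq_comp]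
    rfl
  have h21 : quadLaw P X2 Y2 X1 Y1 = (η ×ₖ η) ∘ₘ μ := by
    rw [quadLaw_swap P hX1 hY1 hX2 hY2, h12, Measure.map_comp _ _ measurable_swap,
      Kernel.map_prod_swap]
  exact ⟨condIndepRV_of_quadLaw_eq_comp hX1 hY1 hX2 hY2 h12,
    condIndepRV_of_quadLaw_eq_comp hX2 hY2 hX1 hY1 h21⟩
end

section
/- Conditional independence of effects given causes under cause variability: Suppose the quadruple (X¹, Y¹, X², Y²) admits a cause-variability X→Y representation. Then Y¹ and Y² are conditionally independent given the pair (X¹, X²). -/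
/-! For fixed `θ` the pairs `(Xⁱ, Yⁱ)` are independent and `Yⁱ` is drawn from `β Xⁱ`, so the law
of `((X¹, X²), (Y¹, Y²))` is `(α θ ⊗ α θ) ⊗ₘ K` with `K (x₁, x₂) = β x₁ ⊗ β x₂`. The kernel `K` does
not depend on `θ`, so the mixture over `θ` is again of the form `ρ ⊗ₘ K`. A joint law
`ρ ⊗ₘ (κ ×ₖ η)` identifies `κ` and `η` as the conditional laws of `Y¹` and `Y²` given `(X¹, X²)`
and their product as the conditional law of the pair, which is conditional independence. -/

open MeasureTheory ProbabilityTheory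

theorem condIndepFun_of_map_eq_compProd_prod {Ω γ β β' : Type*} [MeasurableSpace Ω]
    [StandardBorelSpace Ω] [MeasurableSpace γ] [MeasurableSpace β] [StandardBorelSpace β]
    [Nonempty β] [MeasurableSpace β'] [StandardBorelSpace β'] [Nonempty β']
    {μ : Measure Ω} [IsFiniteMeasure μ] {f : Ω → β} {g : Ω → β'} {k : Ω → γ}
    (hf : Measurable f) (hg : Measurable g) (hk : Measurable k) {ρ : Measure γ} [SFinite ρ]
    {κ : Kernel γ β} [IsMarkovKernel κ] {η : Kernel γ β'} [IsMarkovKernel η]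
    (h : μ.map (fun ω ↦ (k ω, f ω, g ω)) = ρ ⊗ₘ (κ ×ₖ η)) :
    f ⟂ᵢ[k, hk; μ] g := by
  have hρ : μ.map k = ρ := by
    have := congrArg Measure.fst h
    rwa [Measure.fst_compProd, Measure.fst_map_prodMk (hf.prodMk hg)] at this
  subst hρ
  have hκ : μ.map (fun ω ↦ (k ω, f ω)) = μ.map k ⊗ₘ κ := by
    have := congrArg (Measure.map (Prod.map id Prod.fst)) h
    rwa [Measure.map_map (by fun_prop) (by fun_prop), ← Measure.compProd_map measurable_fst,
      ← Kernel.fst_eq, Kernel.fst_prod] at this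
  have hη : μ.map (fun ω ↦ (k ω, g ω)) = μ.map k ⊗ₘ η := by
    have := congrArg (Measure.map (Prod.map id Prod.snd)) h
    rwa [Measure.map_map (by fun_prop) (by fun_prop), ← Measure.compProd_map measurable_snd,
      ← Kernel.snd_eq, Kernel.snd_prod] at this
  rw [condIndepFun_iff_map_prod_eq_prod_condDistrib_prod_condDistrib hf hg hk, h,
    ← Measure.compProd_eq_comp_prod]
  refine Measure.compProd_congr ?_
  filter_upwards [condDistrib_ae_eq_of_measure_eq_compProd k hf.aemeasurable hκ,
    condDistrib_ae_eq_of_measure_eq_compProd k hg.aemeasurable hη] with x hfx hgx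
  rw [Kernel.prod_apply, Kernel.prod_apply, hfx, hgx]

section

variable {T E₁ E₂ F₁ F₂ : Type*} [MeasurableSpace T] [MeasurableSpace E₁] [MeasurableSpace E₂]
  [MeasurableSpace F₁] [MeasurableSpace F₂]

lemma jointXY_eq_id_prod_comp (m : Measure E₁) (β : Kernel E₁ F₁) [IsSFiniteKernel β] :
    jointXY m (fun x ↦ β x) = (Kernel.id ×ₖ β) ∘ₘ m := by
  refine congrArg m.bind (funext fun x ↦ ?_)
  rw [Kernel.prod_apply, Kernel.id_apply, Measure.dirac_prod]

lemma map_parallelComp_id_prod (β₁ : Kernel E₁ F₁) [IsSFiniteKernel β₁]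
    (β₂ : Kernel E₂ F₂) [IsSFiniteKernel β₂] :
    ((Kernel.id ×ₖ β₁) ∥ₖ (Kernel.id ×ₖ β₂)).map
        (fun p : (E₁ × F₁) × E₂ × F₂ ↦ ((p.1.1, p.2.1), p.1.2, p.2.2)) =
      Kernel.id ×ₖ (Kernel.prodMkRight E₂ β₁ ×ₖ Kernel.prodMkLeft E₁ β₂) := by
  ext1 x
  rw [Kernel.map_apply _ (by fun_prop), Kernel.parallelComp_apply, Kernel.prod_apply,
    Kernel.prod_apply, Kernel.prod_apply, Kernel.prod_apply, Kernel.id_apply, Kernel.id_apply,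
    Kernel.id_apply, Measure.dirac_prod, Measure.dirac_prod, Measure.dirac_prod,
    Measure.map_prod_map _ _ (by fun_prop) (by fun_prop),
    Measure.map_map (by fun_prop) (by fun_prop)]
  rfl

lemma map_bind_prod_jointXY_eq_compProd (μ : Measure T) [SFinite μ]
    (α₁ : Kernel T E₁) [IsSFiniteKernel α₁] (α₂ : Kernel T E₂) [IsSFiniteKernel α₂]
    (β₁ : Kernel E₁ F₁) [IsSFiniteKernel β₁] (β₂ : Kernel E₂ F₂) [IsSFiniteKernel β₂] :
    (μ.bind fun θ ↦ (jointXY (α₁ θ) fun x ↦ β₁ x).prod (jointXY (α₂ θ) fun x ↦ β₂ x)).map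
        (fun p ↦ ((p.1.1, p.2.1), p.1.2, p.2.2)) =
      ((α₁ ×ₖ α₂) ∘ₘ μ) ⊗ₘ (Kernel.prodMkRight E₂ β₁ ×ₖ Kernel.prodMkLeft E₁ β₂) := by
  have h : (fun θ ↦ (jointXY (α₁ θ) fun x ↦ β₁ x).prod (jointXY (α₂ θ) fun x ↦ β₂ x)) =
      ((Kernel.id ×ₖ β₁) ∥ₖ (Kernel.id ×ₖ β₂)) ∘ₖ (α₁ ×ₖ α₂) := by
    ext1 θ
    rw [Kernel.parallelComp_comp_prod, Kernel.prod_apply, Kernel.comp_apply, Kernel.comp_apply,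
      jointXY_eq_id_prod_comp, jointXY_eq_id_prod_comp]
  rw [h, ← Measure.comp_assoc, Measure.map_comp _ _ (by fun_prop), map_parallelComp_id_prod,
    ← Measure.compProd_eq_comp_prod]

end

theorem condIndep_effects_of_causeVarRep_general {Ω E F : Type*} [MeasurableSpace Ω]
    [StandardBorelSpace Ω]
    [MeasurableSpace E] [MeasurableSpace F] [StandardBorelSpace F]
    (P : Measure Ω) [IsProbabilityMeasure P]
    (X1 X2 : Ω → E) (Y1 Y2 : Ω → F)
    (hX1 : Measurable X1) (hY1 : Measurable Y1) (hX2 : Measurable X2) (hY2 : Measurable Y2)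
    (hrep : HasCauseVarRep P X1 Y1 X2 Y2) :
    CondIndepRV P Y1 Y2 (fun ω => (X1 ω, X2 ω)) (hX1.prodMk hX2) := by
  obtain ⟨T, _, μ, _, α, _, β, _, hlaw⟩ := hrep
  have : Nonempty F := ⟨Y1 (nonempty_of_isProbabilityMeasure P).some⟩
  have hjoint : P.map (fun ω ↦ ((X1 ω, X2 ω), Y1 ω, Y2 ω)) =
      ((α ×ₖ α) ∘ₘ μ) ⊗ₘ (Kernel.prodMkRight E β ×ₖ Kernel.prodMkLeft E β) := by
    rw [← map_bind_prod_jointXY_eq_compProd, ← hlaw, quadLaw,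
      Measure.map_map (by fun_prop) (by fun_prop)]
    rfl
  exact condIndepFun_of_map_eq_compProd_prod hY1 hY2 (hX1.prodMk hX2) hjoint

/-- **Conditional independence of effects given causes under cause variability.** If the
quadruple `(X¹, Y¹, X², Y²)` admits a cause-variability `X → Y` representation, then
`Y¹` and `Y²` are conditionally independent given the pair `(X¹, X²)`. -/
theorem condIndep_effects_of_causeVarRep {Ω E F : Type*} [MeasurableSpace Ω]
    [StandardBorelSpace Ω]
    [MeasurableSpace E] [StandardBorelSpace E] [MeasurableSpace F] [StandardBorelSpace F]
    (P : Measure Ω) [IsProbabilityMeasure P]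
    (X1 X2 : Ω → E) (Y1 Y2 : Ω → F)
    (hX1 : Measurable X1) (hY1 : Measurable Y1) (hX2 : Measurable X2) (hY2 : Measurable Y2)
    (hrep : HasCauseVarRep P X1 Y1 X2 Y2) :
    CondIndepRV P Y1 Y2 (fun ω => (X1 ω, X2 ω)) (hX1.prodMk hX2) :=
  condIndep_effects_of_causeVarRep_general P X1 X2 Y1 Y2 hX1 hY1 hX2 hY2 hrep
end

section
/- Markov property under mechanism variability: Suppose the quadruple (X¹, Y¹, X², Y²) admits a mechanism-variability X→Y representation. Then X¹ and X² are (unconditionally) independent, and Y¹ is conditionally independent of X² given X¹. -/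
open MeasureTheory ProbabilityTheory

/-! Given the mechanism `ψ`, the two pairs are independent and the second cause `X²` has law `π`,
which does not depend on `ψ`. Mixing over `ψ` therefore keeps the law of `((X¹, Y¹), X²)` a
product measure, so `(X¹, Y¹) ⫫ X²`. Projecting gives `X¹ ⫫ X²`, and the weak union property of
conditional independence gives `Y¹ ⫫ X² | X¹`. -/

section WeakUnion

variable {Ω : Type*} {m m' m₁ m₂ mΩ : MeasurableSpace Ω} {μ : Measure Ω} [IsFiniteMeasure μ]

lemma condExp_indicator_ae_eq_of_indep (hm : m ≤ mΩ) (hm₂ : m₂ ≤ mΩ) (h : Indep m₂ m μ)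
    {t : Set Ω} (ht : MeasurableSet[m₂] t) : μ⟦t | m⟧ =ᵐ[μ] fun _ ↦ μ.real t := by
  refine (condExp_indep_eq hm₂ hm (stronglyMeasurable_const.indicator ht) h).trans ?_
  simp [integral_indicator_const _ (hm₂ t ht)]

theorem condIndep_of_indep_sup [StandardBorelSpace Ω] (hm' : m' ≤ mΩ) (hm₁ : m₁ ≤ mΩ)
    (hm₂ : m₂ ≤ mΩ) (h : Indep (m' ⊔ m₁) m₂ μ) : CondIndep m' m₁ m₂ hm' μ := by
  rw [condIndep_iff _ _ _ hm' hm₁ hm₂]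
  intro s t hs ht
  have hsup : m' ⊔ m₁ ≤ mΩ := sup_le hm' hm₁
  have ht' : μ⟦t | m'⟧ =ᵐ[μ] fun _ ↦ μ.real t :=
    condExp_indicator_ae_eq_of_indep hm' hm₂ (indep_of_indep_of_le_right h.symm le_sup_left) ht
  have ht_sup : μ⟦t | m' ⊔ m₁⟧ =ᵐ[μ] fun _ ↦ μ.real t :=
    condExp_indicator_ae_eq_of_indep hsup hm₂ h.symm ht
  have hs_sm : StronglyMeasurable[m' ⊔ m₁] (s.indicator fun _ ↦ (1 : ℝ)) :=
    stronglyMeasurable_const.indicator (le_sup_right (a := m') _ hs)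
  have hint (u : Set Ω) (hu : MeasurableSet u) : Integrable (u.indicator fun _ ↦ (1 : ℝ)) μ :=
    (integrable_const 1).indicator hu
  have hmul : ((s ∩ t).indicator fun _ ↦ (1 : ℝ)) =
      (s.indicator fun _ ↦ 1) * t.indicator fun _ ↦ 1 := Set.inter_indicator_one
  -- Given `m' ⊔ m₁`, the event `t` has constant conditional probability, so it factors out.
  have hpull : μ⟦s ∩ t | m' ⊔ m₁⟧ =ᵐ[μ] μ.real t • s.indicator fun _ ↦ (1 : ℝ) := by
    rw [hmul]
    filter_upwards [condExp_mul_of_stronglyMeasurable_left hs_sm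
      (hmul ▸ hint _ ((hm₁ s hs).inter (hm₂ t ht))) (hint t (hm₂ t ht)), ht_sup] with ω h1 h2
    simp [h1, h2, mul_comm]
  calc μ⟦s ∩ t | m'⟧ =ᵐ[μ] μ[μ⟦s ∩ t | m' ⊔ m₁⟧ | m'] :=
        (condExp_condExp_of_le le_sup_left hsup).symm
    _ =ᵐ[μ] μ[μ.real t • s.indicator fun _ ↦ (1 : ℝ) | m'] := condExp_congr_ae hpull
    _ =ᵐ[μ] μ.real t • μ⟦s | m'⟧ := condExp_smul _ _ _
    _ =ᵐ[μ] μ⟦s | m'⟧ * μ⟦t | m'⟧ := by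
        filter_upwards [ht'] with ω hω
        simp [hω, mul_comm]

end WeakUnion

section WeakUnionFun

variable {Ω β γ δ : Type*} {mΩ : MeasurableSpace Ω} [StandardBorelSpace Ω]
  [MeasurableSpace β] [MeasurableSpace γ] [MeasurableSpace δ] {μ : Measure Ω} [IsFiniteMeasure μ]

theorem condIndepFun_of_indepFun_prodMk {A : Ω → β} {B : Ω → γ} {C : Ω → δ}
    (hA : Measurable A) (hB : Measurable B) (hC : Measurable C)
    (h : IndepFun (fun ω ↦ (C ω, A ω)) B μ) :
    CondIndepFun (MeasurableSpace.comap C inferInstance) hC.comap_le A B μ := by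
  rw [condIndepFun_iff_condIndep]
  refine condIndep_of_indep_sup hC.comap_le hA.comap_le hB.comap_le ?_
  rw [← MeasurableSpace.comap_prodMk]
  exact h

end WeakUnionFun

theorem indepFun_of_map_prodMk_eq_prod {Ω β γ : Type*} {mΩ : MeasurableSpace Ω}
    [MeasurableSpace β] [MeasurableSpace γ] {P : Measure Ω} [IsFiniteMeasure P]
    {f : Ω → β} {g : Ω → γ} (hf : Measurable f) (hg : Measurable g)
    {μ : Measure β} {ν : Measure γ} [IsProbabilityMeasure μ] [IsProbabilityMeasure ν]
    (h : P.map (fun ω ↦ (f ω, g ω)) = μ.prod ν) : IndepFun f g P := by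
  have hμ : P.map f = μ := by rw [← Measure.fst_map_prodMk hg, h, Measure.fst_prod]
  have hν : P.map g = ν := by rw [← Measure.snd_map_prodMk hf, h, Measure.snd_prod]
  rw [indepFun_iff_map_prod_eq_prod_map_map hf.aemeasurable hg.aemeasurable, hμ, hν, h]

namespace MeasureTheory.Measure

variable {α β γ : Type*} [MeasurableSpace α] [MeasurableSpace β] [MeasurableSpace γ]

lemma prod_const_comp (κ : Kernel α β) [IsSFiniteKernel κ] (μ : Measure α)
    [SFinite μ] (ν : Measure γ) [SFinite ν] :
    (κ ×ₖ Kernel.const α ν) ∘ₘ μ = (κ ∘ₘ μ).prod ν := by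
  rw [comp_eq_comp_const_apply, Kernel.prod_const_comp, Kernel.prod_apply, Kernel.const_apply,
    ← comp_eq_comp_const_apply]

end MeasureTheory.Measure

lemma jointXY_eq_const_compProd_apply {Ψ E F : Type*} [MeasurableSpace Ψ] [MeasurableSpace E]
    [MeasurableSpace F] (π : Measure E) [SFinite π] (β : Kernel (Ψ × E) F) [IsSFiniteKernel β]
    (ψ : Ψ) : jointXY π (fun x ↦ β (ψ, x)) = (Kernel.const Ψ π ⊗ₖ β) ψ := by
  have hκ : (fun x ↦ (β (ψ, x)).map (Prod.mk x)) =
      Kernel.id ×ₖ β.comap (Prod.mk ψ) measurable_prodMk_left := by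
    funext x
    rw [Kernel.prod_apply, Kernel.id_apply, Measure.dirac_prod, Kernel.comap_apply]
  ext s hs
  rw [jointXY, hκ, ← Measure.compProd_eq_comp_prod, Measure.compProd_apply hs,
    Kernel.compProd_apply hs, Kernel.const_apply]
  rfl

theorem indepFun_prodMk_of_hasMechVarRep {Ω E F : Type*} [MeasurableSpace Ω] [MeasurableSpace E]
    [MeasurableSpace F] {P : Measure Ω} [IsFiniteMeasure P] {X1 X2 : Ω → E} {Y1 Y2 : Ω → F}
    (hX1 : Measurable X1) (hY1 : Measurable Y1) (hX2 : Measurable X2) (hY2 : Measurable Y2)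
    (hrep : HasMechVarRep P X1 Y1 X2 Y2) : IndepFun (fun ω ↦ (X1 ω, Y1 ω)) X2 P := by
  obtain ⟨Ψ, _, ν, _, π, _, β, _, hq⟩ := hrep
  set J : Kernel Ψ (E × F) := Kernel.const Ψ π ⊗ₖ β
  have hquad : quadLaw P X1 Y1 X2 Y2 = (J ×ₖ J) ∘ₘ ν := by
    simp_rw [hq, jointXY_eq_const_compProd_apply, ← Kernel.prod_apply]
    rfl
  -- Whatever the mechanism `ψ`, the second cause `X²` has law `π`.
  have hsnd : (J ×ₖ J).map (Prod.map id Prod.fst) = J ×ₖ Kernel.const Ψ π := by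
    rw [← Kernel.map_prod_map _ _ measurable_id measurable_fst, Kernel.map_id, ← Kernel.fst_eq,
      Kernel.fst_compProd]
  have hlaw : P.map (fun ω ↦ ((X1 ω, Y1 ω), X2 ω)) = (J ∘ₘ ν).prod π := by
    calc P.map (fun ω ↦ ((X1 ω, Y1 ω), X2 ω))
        = (quadLaw P X1 Y1 X2 Y2).map (Prod.map id Prod.fst) := by
          rw [quadLaw, Measure.map_map (by fun_prop) (by fun_prop)]
          rfl
      _ = (J ×ₖ Kernel.const Ψ π) ∘ₘ ν := by
          rw [hquad, Measure.map_comp _ _ (by fun_prop), hsnd]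
      _ = (J ∘ₘ ν).prod π := Measure.prod_const_comp J ν π
  exact indepFun_of_map_prodMk_eq_prod (hX1.prodMk hY1) hX2 hlaw

theorem markov_of_mechVarRep_general {Ω E F : Type*} [MeasurableSpace Ω] [StandardBorelSpace Ω]
    [MeasurableSpace E] [MeasurableSpace F]
    (P : Measure Ω) [IsProbabilityMeasure P]
    (X1 X2 : Ω → E) (Y1 Y2 : Ω → F)
    (hX1 : Measurable X1) (hY1 : Measurable Y1) (hX2 : Measurable X2) (hY2 : Measurable Y2)
    (hrep : HasMechVarRep P X1 Y1 X2 Y2) :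
    IndepFun X1 X2 P ∧ CondIndepRV P Y1 X2 X1 hX1 := by
  have h := indepFun_prodMk_of_hasMechVarRep hX1 hY1 hX2 hY2 hrep
  exact ⟨h.comp measurable_fst measurable_id, condIndepFun_of_indepFun_prodMk hY1 hX2 hX1 h⟩

/-- **Markov property under mechanism variability.** If the quadruple `(X¹, Y¹, X², Y²)` admits
a mechanism-variability `X → Y` representation, then `X¹` and `X²` are (unconditionally)
independent and `Y¹ ⫫ X² | X¹`. -/
theorem markov_of_mechVarRep {Ω E F : Type*} [MeasurableSpace Ω] [StandardBorelSpace Ω]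
    [MeasurableSpace E] [StandardBorelSpace E] [MeasurableSpace F] [StandardBorelSpace F]
    (P : Measure Ω) [IsProbabilityMeasure P]
    (X1 X2 : Ω → E) (Y1 Y2 : Ω → F)
    (hX1 : Measurable X1) (hY1 : Measurable Y1) (hX2 : Measurable X2) (hY2 : Measurable Y2)
    (hrep : HasMechVarRep P X1 Y1 X2 Y2) :
    IndepFun X1 X2 P ∧ CondIndepRV P Y1 X2 X1 hX1 :=
  markov_of_mechVarRep_general P X1 X2 Y1 Y2 hX1 hY1 hX2 hY2 hrep
end

section
/- Markov property of reverse-direction representations: Suppose the quadruple (X¹, Y¹, X², Y²) admits a Y→X representation. Then X¹ is conditionally independent of Y² given Y¹, and X² is conditionally independent of Y¹ given Y². -/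
/-!
Under `μ ⊗ ν` the parameter `θ` is independent of `ψ`, and the pair
`(Y¹, Y²)` depends on `ψ` only. Hence, given `(Y¹, Y²)`, the law of `X¹` is the mixture
`∫ α (θ, Y¹) dμ(θ)`, which does not involve `Y²`; so the law of `((Y¹, Y²), X¹)` is
`law (Y¹, Y²) ⊗ₘ η` for a kernel `η` reading only `Y¹`, and that is conditional independence.
The second statement follows by exchanging the two pairs, which leaves the law invariant.
-/

open MeasureTheory ProbabilityTheory

namespace MeasureTheory.Measure

variable {G G' E E' : Type*} [MeasurableSpace G] [MeasurableSpace G'] [MeasurableSpace E]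
  [MeasurableSpace E']

lemma map_compProd_prodMkRight (ρ : Measure (G × G')) [IsFiniteMeasure ρ] (η : Kernel G E)
    [IsFiniteKernel η] :
    (ρ ⊗ₘ η.prodMkRight G').map (fun p ↦ (p.1.1, p.2)) = ρ.fst ⊗ₘ η := by
  refine ext_prod fun {s u} hs hu ↦ ?_
  rw [map_apply (by fun_prop) (hs.prod hu),
    show (fun p : (G × G') × E ↦ (p.1.1, p.2)) ⁻¹' (s ×ˢ u) = (s ×ˢ Set.univ) ×ˢ u by
      ext; simp,
    compProd_apply_prod (hs.prod .univ) hu, compProd_apply_prod hs hu, Measure.fst,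
    setLIntegral_map hs (η.measurable_coe hu) measurable_fst, ← Set.prod_univ]
  rfl

lemma map_prod_compProd_eq_compProd_prodMkRight (m : Measure G) [IsFiniteMeasure m]
    (m' : Measure G') [IsFiniteMeasure m'] (κ : Kernel G E) [IsFiniteKernel κ]
    (κ' : Kernel G' E') [IsMarkovKernel κ'] :
    ((m ⊗ₘ κ).prod (m' ⊗ₘ κ')).map (fun q ↦ ((q.1.1, q.2.1), q.1.2))
      = (m.prod m') ⊗ₘ κ.prodMkRight G' := by
  refine ext_prod₃_iff'.mpr fun {C C' s} hC hC' hs ↦ ?_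
  rw [map_apply (by fun_prop) ((hC.prod hC').prod hs),
    show (fun q : (G × E) × G' × E' ↦ ((q.1.1, q.2.1), q.1.2)) ⁻¹' ((C ×ˢ C') ×ˢ s)
      = (C ×ˢ s) ×ˢ (C' ×ˢ Set.univ) by ext; simp; tauto,
    prod_prod, compProd_apply_prod hC hs, compProd_apply_prod hC' .univ,
    compProd_apply_prod (hC.prod hC') hs, ← prod_restrict]
  simp only [measure_univ, setLIntegral_const, one_mul, Kernel.prodMkRight_apply]
  simpa using (lintegral_prod_mul (μ := m.restrict C) (ν := m'.restrict C')
    (f := fun y ↦ κ y s) (g := 1) (κ.measurable_coe hs).aemeasurable aemeasurable_const).symm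

end MeasureTheory.Measure

namespace ProbabilityTheory

theorem condIndepFun_of_map_eq_compProd_prodMkRight {Ω β β' γ : Type*}
    {mΩ : MeasurableSpace Ω} [StandardBorelSpace Ω] {mβ : MeasurableSpace β}
    {mβ' : MeasurableSpace β'} {mγ : MeasurableSpace γ}
    [StandardBorelSpace β] [Nonempty β] [StandardBorelSpace β'] [Nonempty β']
    {μ : Measure Ω} [IsFiniteMeasure μ] {f : Ω → β} {g : Ω → β'} {k : Ω → γ}
    (hf : Measurable f) (hg : Measurable g) (hk : Measurable k)
    {ρ : Measure (γ × β')} [IsFiniteMeasure ρ] {η : Kernel γ β} [IsMarkovKernel η]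
    (h : μ.map (fun ω ↦ ((k ω, g ω), f ω)) = ρ ⊗ₘ η.prodMkRight β') :
    g ⟂ᵢ[k, hk; μ] f := by
  have hρ : μ.map (fun ω ↦ (k ω, g ω)) = ρ := by
    rw [← Measure.fst_map_prodMk hf, h, Measure.fst_compProd]
  have hkf : μ.map (fun ω ↦ (k ω, f ω)) = μ.map k ⊗ₘ η := by
    calc μ.map (fun ω ↦ (k ω, f ω))
        = (μ.map (fun ω ↦ ((k ω, g ω), f ω))).map (fun p ↦ (p.1.1, p.2)) := by
          rw [Measure.map_map (by fun_prop) (by fun_prop)]; rfl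
      _ = μ.map k ⊗ₘ η := by
          rw [h, Measure.map_compProd_prodMkRight, ← hρ, Measure.fst_map_prodMk hg]
  rw [condIndepFun_iff_condDistrib_prod_ae_eq_prodMkRight hf hg hk]
  have h_kg := condDistrib_ae_eq_of_measure_eq_compProd _ hf.aemeasurable (hρ ▸ h)
  have h_k := condDistrib_ae_eq_of_measure_eq_compProd _ hf.aemeasurable hkf
  rw [← Measure.fst_map_prodMk hg] at h_k
  filter_upwards [h_kg, ae_of_ae_map measurable_fst.aemeasurable h_k] with x hx hx'
  rw [hx, Kernel.prodMkRight_apply, Kernel.prodMkRight_apply, hx']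

namespace Kernel

variable {T Ψ G G' E E' : Type*} [MeasurableSpace T] [MeasurableSpace Ψ] [MeasurableSpace G]
  [MeasurableSpace G'] [MeasurableSpace E] [MeasurableSpace E']

lemma comp_const_prod_id_apply (κ : Kernel (T × G) E) (μ : Measure T) [SFinite μ] (x : G)
    {s : Set E} (hs : MeasurableSet s) :
    (κ ∘ₖ (const G μ ×ₖ Kernel.id)) x s = ∫⁻ θ, κ (θ, x) s ∂μ := by
  rw [comp_apply' _ _ _ hs, prod_apply, const_apply, id_apply, Measure.prod_dirac,
    MeasureTheory.lintegral_map (κ.measurable_coe hs) (by fun_prop)]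

lemma comap_fst_comp_const_prod_id (κ : Kernel (T × G) E) [IsSFiniteKernel κ] (μ : Measure T)
    [SFinite μ] :
    κ.comap (fun q : T × G × G' ↦ (q.1, q.2.1)) (by fun_prop) ∘ₖ (const (G × G') μ ×ₖ Kernel.id)
      = (κ ∘ₖ (const G μ ×ₖ Kernel.id)).prodMkRight G' := by
  ext x s hs
  rw [comp_const_prod_id_apply _ _ _ hs, prodMkRight_apply, comp_const_prod_id_apply _ _ _ hs]
  rfl

noncomputable def splitCompProd (M : Kernel Ψ G) (κ : Kernel (T × G) E) :
    Kernel (T × Ψ) (G × E) :=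
  M.prodMkLeft T ⊗ₖ κ.comap (fun q ↦ (q.1.1, q.2)) (by fun_prop)

instance (M : Kernel Ψ G) (κ : Kernel (T × G) E) : IsSFiniteKernel (splitCompProd M κ) := by
  unfold splitCompProd; infer_instance

instance (M : Kernel Ψ G) [IsMarkovKernel M] (κ : Kernel (T × G) E) [IsMarkovKernel κ] :
    IsMarkovKernel (splitCompProd M κ) := by
  unfold splitCompProd; infer_instance

lemma splitCompProd_apply (M : Kernel Ψ G) [IsSFiniteKernel M] (κ : Kernel (T × G) E)
    [IsSFiniteKernel κ] (p : T × Ψ) :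
    splitCompProd M κ p = M p.2 ⊗ₘ κ.comap (Prod.mk p.1) (by fun_prop) := by
  rw [splitCompProd, compProd_apply_eq_compProd_sectR]
  rfl

lemma map_splitCompProd_prod_splitCompProd (M : Kernel Ψ G) [IsFiniteKernel M]
    (κ : Kernel (T × G) E) [IsFiniteKernel κ] (M' : Kernel Ψ G') [IsFiniteKernel M']
    (κ' : Kernel (T × G') E') [IsMarkovKernel κ'] :
    (splitCompProd M κ ×ₖ splitCompProd M' κ').map (fun q ↦ ((q.1.1, q.2.1), q.1.2))
      = splitCompProd (M ×ₖ M') (κ.comap (fun q ↦ (q.1, q.2.1)) (by fun_prop)) := by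
  ext p : 1
  rw [map_apply _ (by fun_prop), prod_apply, splitCompProd_apply, splitCompProd_apply,
    splitCompProd_apply, Measure.map_prod_compProd_eq_compProd_prodMkRight, prod_apply]
  rfl

/-- Independence of `θ` and `ψ` lets the two averages be taken separately, one per stage. -/
lemma splitCompProd_comp_prod (M : Kernel Ψ G) [IsFiniteKernel M] (κ : Kernel (T × G) E)
    [IsFiniteKernel κ] (μ : Measure T) [IsFiniteMeasure μ] (ν : Measure Ψ) [IsFiniteMeasure ν] :
    splitCompProd M κ ∘ₘ μ.prod ν = (M ∘ₘ ν) ⊗ₘ (κ ∘ₖ (const G μ ×ₖ Kernel.id)) := by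
  refine (Measure.ext_prod fun {A s} hA hs ↦ ?_).symm
  rw [Measure.compProd_apply_prod hA hs, Measure.bind_apply (hA.prod hs) (Kernel.aemeasurable _),
    ← lintegral_indicator hA,
    Measure.lintegral_bind (Kernel.aemeasurable _)
      ((Kernel.measurable_coe _ hs).indicator hA).aemeasurable,
    MeasureTheory.lintegral_prod_symm _ (Kernel.measurable_coe _ (hA.prod hs)).aemeasurable]
  refine lintegral_congr fun ψ ↦ ?_
  simp_rw [splitCompProd_apply, Measure.compProd_apply_prod hA hs, comap_apply]
  rw [lintegral_indicator hA, ← lintegral_lintegral_swap ?_]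
  · exact setLIntegral_congr_fun hA fun x _ ↦ comp_const_prod_id_apply κ μ x hs
  · exact ((κ.measurable_coe hs).comp measurable_swap).aemeasurable

end Kernel

end ProbabilityTheory

lemma jointYX_eq_map_swap_compProd {E F : Type*} [MeasurableSpace E] [MeasurableSpace F]
    (m : Measure F) [SFinite m] (κ : Kernel F E) [IsSFiniteKernel κ] :
    jointYX m κ = (m ⊗ₘ κ).map Prod.swap := by
  rw [Measure.compProd_eq_comp_prod, Measure.map_comp _ _ measurable_swap, jointYX]
  congr 1
  funext y
  rw [Kernel.map_apply _ measurable_swap, Kernel.prod_apply, Kernel.id_apply, Measure.dirac_prod,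
    Measure.map_map measurable_swap measurable_prodMk_left]
  rfl

section RevRep

open Kernel

variable {Ω E F T Ψ : Type*} [MeasurableSpace Ω] [MeasurableSpace E] [MeasurableSpace F]
  [MeasurableSpace T] [MeasurableSpace Ψ] {P : Measure Ω} {X1 X2 : Ω → E} {Y1 Y2 : Ω → F}
  {μ : Measure T} {ν : Measure Ψ}

lemma map_pairs_eq_splitCompProd_prod_comp {β : Kernel Ψ F} [IsSFiniteKernel β]
    {α : Kernel (T × F) E} [IsSFiniteKernel α]
    (hX1 : Measurable X1) (hY1 : Measurable Y1) (hX2 : Measurable X2) (hY2 : Measurable Y2)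
    (hrep : quadLaw P X1 Y1 X2 Y2 = (μ.prod ν).bind fun p =>
      (jointYX (β p.2) fun y => α (p.1, y)).prod (jointYX (β p.2) fun y => α (p.1, y))) :
    P.map (fun ω ↦ ((Y1 ω, X1 ω), (Y2 ω, X2 ω)))
      = (splitCompProd β α ×ₖ splitCompProd β α) ∘ₘ μ.prod ν := by
  have hJ (p : T × Ψ) :
      jointYX (β p.2) (fun y ↦ α (p.1, y)) = (splitCompProd β α p).map Prod.swap := by
    rw [splitCompProd_apply, ← jointYX_eq_map_swap_compProd, coe_comap]
    rfl
  have hσ : Measurable (Prod.map (Prod.swap : E × F → F × E) (Prod.swap : E × F → F × E)) := by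
    fun_prop
  have hK : (fun p ↦ (jointYX (β p.2) fun y => α (p.1, y)).prod
        (jointYX (β p.2) fun y => α (p.1, y)))
      = ⇑((splitCompProd β α ×ₖ splitCompProd β α).map (Prod.map Prod.swap Prod.swap)) := by
    funext p
    rw [map_apply _ (by fun_prop), prod_apply, hJ, Measure.map_prod_map _ _ measurable_swap
      measurable_swap]
  calc P.map (fun ω ↦ ((Y1 ω, X1 ω), (Y2 ω, X2 ω)))
      = (quadLaw P X1 Y1 X2 Y2).map (Prod.map Prod.swap Prod.swap) := by
        rw [quadLaw, Measure.map_map hσ (by fun_prop)]; rfl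
    _ = (splitCompProd β α ×ₖ splitCompProd β α) ∘ₘ μ.prod ν := by
        rw [hrep, hK, ← Measure.map_comp _ _ (by fun_prop), Measure.map_map hσ (by fun_prop),
          Prod.map_comp_map]
        simp

theorem condIndepFun_of_map_eq_splitCompProd_prod_comp [StandardBorelSpace Ω]
    [StandardBorelSpace E] [Nonempty E] [StandardBorelSpace F] [Nonempty F] [IsFiniteMeasure P]
    [IsProbabilityMeasure μ] [IsFiniteMeasure ν] {β β' : Kernel Ψ F} [IsFiniteKernel β]
    [IsFiniteKernel β'] {α α' : Kernel (T × F) E} [IsMarkovKernel α] [IsMarkovKernel α']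
    (hX1 : Measurable X1) (hY1 : Measurable Y1) (hX2 : Measurable X2) (hY2 : Measurable Y2)
    (h : P.map (fun ω ↦ ((Y1 ω, X1 ω), (Y2 ω, X2 ω)))
      = (splitCompProd β α ×ₖ splitCompProd β' α') ∘ₘ μ.prod ν) :
    Y2 ⟂ᵢ[Y1, hY1; P] X1 := by
  refine condIndepFun_of_map_eq_compProd_prodMkRight hX1 hY2 hY1 (ρ := (β ×ₖ β') ∘ₘ ν)
    (η := α ∘ₖ (const F μ ×ₖ Kernel.id)) ?_
  calc P.map (fun ω ↦ ((Y1 ω, Y2 ω), X1 ω))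
      = (P.map (fun ω ↦ ((Y1 ω, X1 ω), (Y2 ω, X2 ω)))).map
          (fun q ↦ ((q.1.1, q.2.1), q.1.2)) := by
        rw [Measure.map_map (by fun_prop) (by fun_prop)]; rfl
    _ = ((β ×ₖ β') ∘ₘ ν) ⊗ₘ (α ∘ₖ (const F μ ×ₖ Kernel.id)).prodMkRight F := by
        rw [h, Measure.map_comp _ _ (by fun_prop), map_splitCompProd_prod_splitCompProd,
          splitCompProd_comp_prod, comap_fst_comp_const_prod_id]

end RevRep

/-- **Markov property of reverse-direction representations.** If the quadruple
`(X¹, Y¹, X², Y²)` admits a `Y → X` representation, then `X¹ ⫫ Y² | Y¹` and `X² ⫫ Y¹ | Y²`. -/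
theorem markov_of_revRep {Ω E F : Type*} [MeasurableSpace Ω] [StandardBorelSpace Ω]
    [MeasurableSpace E] [StandardBorelSpace E] [MeasurableSpace F] [StandardBorelSpace F]
    (P : Measure Ω) [IsProbabilityMeasure P]
    (X1 X2 : Ω → E) (Y1 Y2 : Ω → F)
    (hX1 : Measurable X1) (hY1 : Measurable Y1) (hX2 : Measurable X2) (hY2 : Measurable Y2)
    (hrep : HasRevRep P X1 Y1 X2 Y2) :
    CondIndepRV P X1 Y2 Y1 hY1 ∧ CondIndepRV P X2 Y1 Y2 hY2 := by
  obtain ⟨T, _, Ψ, _, μ, _, ν, _, β, _, α, _, hrep⟩ := hrep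
  have : Nonempty Ω := nonempty_of_isProbabilityMeasure P
  have : Nonempty E := .map X1 ‹_›
  have : Nonempty F := .map Y1 ‹_›
  have h12 := map_pairs_eq_splitCompProd_prod_comp hX1 hY1 hX2 hY2 hrep
  have h21 : P.map (fun ω ↦ ((Y2 ω, X2 ω), (Y1 ω, X1 ω)))
      = (Kernel.splitCompProd β α ×ₖ Kernel.splitCompProd β α) ∘ₘ μ.prod ν := by
    rw [← Kernel.map_prod_swap, ← Measure.map_comp _ _ measurable_swap, ← h12,
      Measure.map_map measurable_swap (by fun_prop)]
    rfl
  exact ⟨(condIndepFun_of_map_eq_splitCompProd_prod_comp hX1 hY1 hX2 hY2 h12).symm,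
    (condIndepFun_of_map_eq_splitCompProd_prod_comp hX2 hY2 hX1 hY1 h21).symm⟩
end

section
/- Non-degeneracy of cause variability: There exist a probability space and Bool-valued random variables X¹, Y¹, X², Y² whose joint law admits a cause-variability X→Y representation (with E = F = Bool), yet X¹ is not conditionally independent of Y² given Y¹. Consequently this joint law admits no Y→X representation. -/
open MeasureTheory ProbabilityTheory

/-!
Let `θ` be a fair coin, `X¹ = X² = θ`, and let `Yⁱ` copy `Xⁱ` when `Xⁱ = true` and be an
independent fair coin otherwise. Knowing `Y¹ = true` leaves `θ` undetermined, and `X¹` then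
changes the odds of `Y²`: with `s = u = {true}` and `y = true`,
`P(X¹ ∈ s, Y¹ = y, Y² ∈ u) P(Y¹ = y) = 1/2 · 3/4` while
`P(X¹ ∈ s, Y¹ = y) P(Y¹ = y, Y² ∈ u) = 1/2 · 5/8`.

Both conditional independence of `X¹` and `Y²` given `Y¹` and a `Y → X` representation force
these two products to agree. For a `Y → X` representation, `P(X¹ ∈ s, Y¹ = y, Y² ∈ u)` splits as
`(∫ α (θ, y) s dμ) · (∫ β ψ {y} · β ψ u dν)` because the mixing measure `μ ⊗ ν` is a product,
and the identity follows by specialising `s` and `u` to `univ`.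
-/

open scoped ENNReal

section CondIndepOnFiber

variable {Ω β β' γ : Type*} [MeasurableSpace Ω] [MeasurableSpace β] [MeasurableSpace β']
  [MeasurableSpace γ]

/-- `P(f ∈ s, g ∈ t | k = y) = P(f ∈ s | k = y) P(g ∈ t | k = y)`, multiplied out so that no
division by `P(k = y)` occurs. -/
def CondIndepOnFiber (μ : Measure Ω) (f : Ω → β) (g : Ω → β') (k : Ω → γ) (y : γ)
    (s : Set β) (t : Set β') : Prop :=
  μ (f ⁻¹' s ∩ k ⁻¹' {y} ∩ g ⁻¹' t) * μ (k ⁻¹' {y}) =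
    μ (f ⁻¹' s ∩ k ⁻¹' {y}) * μ (k ⁻¹' {y} ∩ g ⁻¹' t)

variable [StandardBorelSpace Ω] [StandardBorelSpace β] [Nonempty β] [StandardBorelSpace β']
  [Nonempty β'] [MeasurableSingletonClass γ] {μ : Measure Ω} [IsFiniteMeasure μ]
  {f : Ω → β} {g : Ω → β'} {k : Ω → γ}

lemma measure_inter_preimage_eq_mul_condDistrib_of_condIndepFun (hf : Measurable f)
    (hg : Measurable g) (hk : Measurable k) (h : f ⟂ᵢ[k, hk; μ] g) (y : γ) {s : Set β}
    {t : Set β'} (hs : MeasurableSet s) (ht : MeasurableSet t) :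
    μ (f ⁻¹' s ∩ k ⁻¹' {y} ∩ g ⁻¹' t) =
      μ (k ⁻¹' {y}) * condDistrib f k μ y s * condDistrib g k μ y t := by
  have hy := measurableSet_singleton y
  have hrect : MeasurableSet ({y} ×ˢ s ×ˢ t) := hy.prod (hs.prod ht)
  have hlaw := congrArg (· ({y} ×ˢ s ×ˢ t))
    ((condIndepFun_iff_map_prod_eq_prod_condDistrib_prod_condDistrib hf hg hk).mp h)
  have hpre : (fun ω => (k ω, f ω, g ω)) ⁻¹' ({y} ×ˢ s ×ˢ t) =
      f ⁻¹' s ∩ k ⁻¹' {y} ∩ g ⁻¹' t := by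
    ext ω
    simp only [Set.mem_preimage, Set.mem_prod, Set.mem_inter_iff, Set.mem_singleton_iff]
    tauto
  have hkernel (a : γ) : (Kernel.id ×ₖ (condDistrib f k μ ×ₖ condDistrib g k μ)) a
      ({y} ×ˢ s ×ˢ t) =
        Set.indicator {y} (fun a => condDistrib f k μ a s * condDistrib g k μ a t) a := by
    rw [Kernel.prod_apply_prod, Kernel.prod_apply_prod, Kernel.id_apply,
      Measure.dirac_apply' _ hy]
    by_cases ha : a = y <;> simp [ha]
  rw [Measure.map_apply (by fun_prop) hrect, hpre, Measure.bind_apply hrect (by fun_prop),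
    lintegral_congr hkernel, lintegral_indicator hy, lintegral_singleton,
    Measure.map_apply hk hy] at hlaw
  rw [hlaw]
  ring

theorem condIndepOnFiber_of_condIndepFun (hf : Measurable f) (hg : Measurable g)
    (hk : Measurable k) (h : f ⟂ᵢ[k, hk; μ] g) (y : γ) {s : Set β} {t : Set β'}
    (hs : MeasurableSet s) (ht : MeasurableSet t) : CondIndepOnFiber μ f g k y s t := by
  have hfactor {s : Set β} {t : Set β'} (hs : MeasurableSet s) (ht : MeasurableSet t) :=
    measure_inter_preimage_eq_mul_condDistrib_of_condIndepFun hf hg hk h y hs ht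
  have hfs := hfactor hs MeasurableSet.univ
  have hgt := hfactor MeasurableSet.univ ht
  simp only [Set.preimage_univ, Set.inter_univ, Set.univ_inter, measure_univ, mul_one] at hfs hgt
  rw [CondIndepOnFiber, hfactor hs ht, hfs, hgt]
  ring

end CondIndepOnFiber

section JointLaws

variable {E F : Type*} [MeasurableSpace E] [MeasurableSpace F]

lemma jointXY_eq_compProd (m : Measure E) [SFinite m] (κ : Kernel E F) [IsSFiniteKernel κ] :
    jointXY m κ = m ⊗ₘ κ := by
  rw [Measure.compProd_eq_comp_prod, jointXY]
  congr with x : 1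
  rw [Kernel.prod_apply, Kernel.id_apply, Measure.dirac_prod]

lemma jointYX_eq_map_compProd (m : Measure F) [SFinite m] (κ : Kernel F E) [IsSFiniteKernel κ] :
    jointYX m κ = (m ⊗ₘ κ).map Prod.swap := by
  rw [Measure.compProd_eq_comp_prod, Measure.map_comp _ _ measurable_swap, jointYX]
  congr with y : 1
  rw [Kernel.map_apply _ measurable_swap, Kernel.prod_apply, Kernel.id_apply, Measure.prod_swap,
    Measure.prod_dirac]

lemma jointYX_apply_prod_singleton [MeasurableSingletonClass F] (m : Measure F) [SFinite m]
    (κ : Kernel F E) [IsSFiniteKernel κ] {s : Set E} (hs : MeasurableSet s) (y : F) :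
    jointYX m κ (s ×ˢ {y}) = κ y s * m {y} := by
  have hy := measurableSet_singleton y
  rw [jointYX_eq_map_compProd, Measure.map_apply measurable_swap (hs.prod hy),
    Set.preimage_swap_prod, Measure.compProd_apply_prod hy hs, lintegral_singleton]

lemma jointYX_apply_univ_prod (m : Measure F) [SFinite m] (κ : Kernel F E) [IsMarkovKernel κ]
    {u : Set F} (hu : MeasurableSet u) : jointYX m κ (Set.univ ×ˢ u) = m u := by
  rw [jointYX_eq_map_compProd, Measure.map_apply measurable_swap (MeasurableSet.univ.prod hu),
    Set.preimage_swap_prod, Measure.compProd_apply_prod hu .univ]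
  simp

variable {Ω : Type*} [MeasurableSpace Ω] (P : Measure Ω) {X1 X2 : Ω → E} {Y1 Y2 : Ω → F}

lemma quadLaw_apply_prod (hX1 : Measurable X1) (hY1 : Measurable Y1) (hX2 : Measurable X2)
    (hY2 : Measurable Y2) {s s' : Set E} {t t' : Set F} (hs : MeasurableSet s)
    (ht : MeasurableSet t) (hs' : MeasurableSet s') (ht' : MeasurableSet t') :
    quadLaw P X1 Y1 X2 Y2 ((s ×ˢ t) ×ˢ (s' ×ˢ t')) =
      P (X1 ⁻¹' s ∩ Y1 ⁻¹' t ∩ (X2 ⁻¹' s' ∩ Y2 ⁻¹' t')) := by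
  rw [quadLaw, Measure.map_apply (by fun_prop) ((hs.prod ht).prod (hs'.prod ht'))]
  rfl

lemma condIndepOnFiber_iff_quadLaw [MeasurableSingletonClass F] (hX1 : Measurable X1)
    (hY1 : Measurable Y1) (hX2 : Measurable X2) (hY2 : Measurable Y2) (y : F) {s : Set E} {u : Set F}
    (hs : MeasurableSet s) (hu : MeasurableSet u) :
    CondIndepOnFiber P X1 Y2 Y1 y s u ↔
      quadLaw P X1 Y1 X2 Y2 ((s ×ˢ {y}) ×ˢ (Set.univ ×ˢ u)) *
          quadLaw P X1 Y1 X2 Y2 ((Set.univ ×ˢ {y}) ×ˢ (Set.univ ×ˢ Set.univ)) =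
        quadLaw P X1 Y1 X2 Y2 ((s ×ˢ {y}) ×ˢ (Set.univ ×ˢ Set.univ)) *
          quadLaw P X1 Y1 X2 Y2 ((Set.univ ×ˢ {y}) ×ˢ (Set.univ ×ˢ u)) := by
  have hy := measurableSet_singleton y
  simp only [quadLaw_apply_prod P hX1 hY1 hX2 hY2 _ hy _ _, hs, hu, MeasurableSet.univ,
    Set.preimage_univ, Set.inter_univ, Set.univ_inter]
  rfl

end JointLaws

section RevRep

variable {T Ψ E F : Type*} [MeasurableSpace T] [MeasurableSpace Ψ] [MeasurableSpace E]
  [MeasurableSpace F]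

noncomputable def revKernel (β : Kernel Ψ F) (α : Kernel (T × F) E) : Kernel (T × Ψ) (E × F) :=
  ((β.comap Prod.snd measurable_snd) ⊗ₖ (α.comap (fun q => (q.1.1, q.2)) (by fun_prop))).map
    Prod.swap

instance (β : Kernel Ψ F) [IsSFiniteKernel β] (α : Kernel (T × F) E) [IsSFiniteKernel α] :
    IsSFiniteKernel (revKernel β α) := by
  rw [revKernel]; infer_instance

lemma revKernel_apply (β : Kernel Ψ F) [IsSFiniteKernel β] (α : Kernel (T × F) E)
    [IsSFiniteKernel α] (p : T × Ψ) : revKernel β α p = jointYX (β p.2) (α.sectR p.1) := by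
  rw [revKernel, Kernel.map_apply _ measurable_swap, Kernel.compProd_apply_eq_compProd_sectR]
  exact (jointYX_eq_map_compProd (β p.2) (α.sectR p.1)).symm

lemma revMixture_apply [MeasurableSingletonClass F] (μ : Measure T) (ν : Measure Ψ)
    [SFinite ν] (β : Kernel Ψ F) [IsMarkovKernel β] (α : Kernel (T × F) E) [IsMarkovKernel α]
    (y : F) {s : Set E} {u : Set F} (hs : MeasurableSet s) (hu : MeasurableSet u) :
    ((μ.prod ν).bind fun p =>
        (jointYX (β p.2) fun y => α (p.1, y)).prod (jointYX (β p.2) fun y => α (p.1, y)))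
      ((s ×ˢ {y}) ×ˢ (Set.univ ×ˢ u)) =
      (∫⁻ θ, α (θ, y) s ∂μ) * ∫⁻ ψ, β ψ {y} * β ψ u ∂ν := by
  have hy := measurableSet_singleton y
  have hmixture : (fun p : T × Ψ =>
      (jointYX (β p.2) fun y => α (p.1, y)).prod (jointYX (β p.2) fun y => α (p.1, y))) =
      ⇑(revKernel β α ×ₖ revKernel β α) := by
    funext p
    rw [Kernel.prod_apply, revKernel_apply]
    rfl
  rw [hmixture, Measure.bind_apply ((hs.prod hy).prod (MeasurableSet.univ.prod hu)) (by fun_prop),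
    ← lintegral_prod_mul (f := fun θ => α (θ, y) s) (g := fun ψ => β ψ {y} * β ψ u)
      ((α.measurable_coe hs).comp measurable_prodMk_right).aemeasurable
      ((β.measurable_coe hy).mul (β.measurable_coe hu)).aemeasurable]
  refine lintegral_congr fun p => ?_
  rw [Kernel.prod_apply, Measure.prod_prod, revKernel_apply, jointYX_apply_prod_singleton _ _ hs,
    jointYX_apply_univ_prod _ _ hu, Kernel.sectR_apply]
  ring

theorem HasRevRep.condIndepOnFiber [MeasurableSingletonClass F] {Ω : Type*} [MeasurableSpace Ω]
    {P : Measure Ω} {X1 X2 : Ω → E} {Y1 Y2 : Ω → F} (hX1 : Measurable X1)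
    (hY1 : Measurable Y1) (hX2 : Measurable X2) (hY2 : Measurable Y2)
    (h : HasRevRep P X1 Y1 X2 Y2) (y : F) {s : Set E} {u : Set F} (hs : MeasurableSet s)
    (hu : MeasurableSet u) : CondIndepOnFiber P X1 Y2 Y1 y s u := by
  obtain ⟨T, _, Ψ, _, μ, _, ν, _, β, _, α, _, hrep⟩ := h
  rw [condIndepOnFiber_iff_quadLaw P hX1 hY1 hX2 hY2 y hs hu, hrep]
  simp only [revMixture_apply μ ν β α y, hs, hu, MeasurableSet.univ, measure_univ, mul_one]
  ring

end RevRep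

section CauseVar

variable {T E F : Type*} [MeasurableSpace T] [MeasurableSpace E] [MeasurableSpace F]

noncomputable def causeVarLaw (μ : Measure T) (α : Kernel T E) (β : Kernel E F) :
    Measure ((E × F) × (E × F)) :=
  μ.bind fun θ => (jointXY (α θ) fun x => β x).prod (jointXY (α θ) fun x => β x)

lemma causeVarLaw_eq_comp (μ : Measure T) (α : Kernel T E) [IsSFiniteKernel α] (β : Kernel E F)
    [IsSFiniteKernel β] :
    causeVarLaw μ α β = ((α ⊗ₖ β.prodMkLeft T) ×ₖ (α ⊗ₖ β.prodMkLeft T)) ∘ₘ μ := by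
  rw [causeVarLaw]
  congr with θ : 1
  rw [Kernel.prod_apply, Kernel.compProd_apply_eq_compProd_sectR, Kernel.sectR_prodMkLeft,
    jointXY_eq_compProd]

instance (μ : Measure T) [IsProbabilityMeasure μ] (α : Kernel T E) [IsMarkovKernel α]
    (β : Kernel E F) [IsMarkovKernel β] : IsProbabilityMeasure (causeVarLaw μ α β) := by
  rw [causeVarLaw_eq_comp]; infer_instance

lemma causeVarLaw_apply_prod (μ : Measure T) (α : Kernel T E) [IsSFiniteKernel α]
    (β : Kernel E F) [IsSFiniteKernel β] {A B : Set (E × F)} (hA : MeasurableSet A)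
    (hB : MeasurableSet B) :
    causeVarLaw μ α β (A ×ˢ B) = ∫⁻ θ, (α θ ⊗ₘ β) A * (α θ ⊗ₘ β) B ∂μ := by
  rw [causeVarLaw_eq_comp, Measure.bind_apply (hA.prod hB) (Kernel.aemeasurable _)]
  simp only [Kernel.prod_apply, Measure.prod_prod, Kernel.compProd_apply_eq_compProd_sectR,
    Kernel.sectR_prodMkLeft]

lemma hasCauseVarRep_causeVarLaw {T : Type} [MeasurableSpace T] (μ : Measure T)
    [IsProbabilityMeasure μ] (α : Kernel T E) [IsMarkovKernel α] (β : Kernel E F)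
    [IsMarkovKernel β] :
    HasCauseVarRep (causeVarLaw μ α β) (·.1.1) (·.1.2) (·.2.1) (·.2.2) :=
  ⟨T, _, μ, inferInstance, α, inferInstance, β, inferInstance, Measure.map_id⟩

end CauseVar

section Example

noncomputable def coin : Measure Bool := (2⁻¹ : ℝ≥0∞) • Measure.count

lemma lintegral_coin (f : Bool → ℝ≥0∞) : ∫⁻ b, f b ∂coin = 2⁻¹ * (f true + f false) := by
  rw [coin, lintegral_smul_measure, lintegral_count, tsum_fintype, Fintype.sum_bool, smul_eq_mul]

lemma coin_singleton (b : Bool) : coin {b} = 2⁻¹ := by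
  simp [coin]

instance : IsProbabilityMeasure coin := by
  constructor
  rw [← setLIntegral_one, Measure.restrict_univ, lintegral_coin, one_add_one_eq_two,
    ENNReal.inv_mul_cancel two_ne_zero ENNReal.ofNat_ne_top]

noncomputable def copyOrCoin : Kernel Bool Bool :=
  Kernel.ofFunOfCountable fun x => if x then Measure.dirac true else coin

lemma copyOrCoin_apply (x : Bool) :
    copyOrCoin x = if x then Measure.dirac true else coin := rfl

instance : IsMarkovKernel copyOrCoin :=
  ⟨fun x => by rw [copyOrCoin_apply]; split <;> infer_instance⟩

theorem not_condIndepOnFiber_copyOrCoin :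
    ¬ CondIndepOnFiber (causeVarLaw coin Kernel.id copyOrCoin) (·.1.1) (·.2.2) (·.1.2) true
      {true} {true} := by
  have hsingle := measurableSet_singleton true
  rw [condIndepOnFiber_iff_quadLaw _ .of_discrete .of_discrete .of_discrete .of_discrete true
    hsingle hsingle, show quadLaw _ _ _ _ _ = _ from Measure.map_id]
  simp only [causeVarLaw_apply_prod, lintegral_coin, Kernel.id_apply,
    Measure.dirac_compProd_apply, hsingle, MeasurableSet.univ, MeasurableSet.prod,
    Set.mk_preimage_prod_right_eq_if, Set.mem_singleton_iff, Set.mem_univ,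
    copyOrCoin_apply, measure_univ, Measure.dirac_apply', Set.indicator_of_mem, Pi.one_apply,
    mul_one, Bool.false_eq_true, ↓reduceIte, measure_empty, coin_singleton, zero_mul, add_zero]
  show ¬ (2⁻¹ * (2⁻¹ * (1 + 2⁻¹)) : ℝ≥0∞) = 2⁻¹ * (2⁻¹ * (1 + 2⁻¹ * 2⁻¹))
  intro h
  simpa [ENNReal.toReal_add, ENNReal.mul_eq_top] using congrArg ENNReal.toReal h

end Example

/-- **Non-degeneracy of cause variability.** There exist a probability space and Bool-valued
random variables `X¹, Y¹, X², Y²` whose joint law admits a cause-variability `X → Y`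
representation, yet `X¹` is not conditionally independent of `Y²` given `Y¹`; consequently,
this joint law admits no `Y → X` representation. -/
theorem exists_causeVarRep_not_condIndep :
    ∃ (Ω : Type) (mΩ : MeasurableSpace Ω), letI := mΩ;
    ∃ (_ : StandardBorelSpace Ω) (P : Measure Ω) (hP : IsProbabilityMeasure P), letI := hP;
    ∃ (X1 Y1 X2 Y2 : Ω → Bool) (_ : Measurable X1) (hY1 : Measurable Y1)
      (_ : Measurable X2) (_ : Measurable Y2),
      HasCauseVarRep P X1 Y1 X2 Y2 ∧
      ¬ CondIndepRV P X1 Y2 Y1 hY1 ∧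
      ¬ HasRevRep P X1 Y1 X2 Y2 := by
  have hsingle := measurableSet_singleton true
  refine ⟨(Bool × Bool) × (Bool × Bool), inferInstance, inferInstance,
    causeVarLaw coin Kernel.id copyOrCoin, inferInstance, (·.1.1), (·.1.2), (·.2.1), (·.2.2),
    .of_discrete, .of_discrete, .of_discrete, .of_discrete, hasCauseVarRep_causeVarLaw _ _ _,
    fun hCI => ?_, fun hrev => ?_⟩
  · exact not_condIndepOnFiber_copyOrCoin <| condIndepOnFiber_of_condIndepFun .of_discrete
      .of_discrete .of_discrete hCI true hsingle hsingle
  · exact not_condIndepOnFiber_copyOrCoin <| hrev.condIndepOnFiber .of_discrete .of_discrete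
      .of_discrete .of_discrete true hsingle hsingle
end

section
/- Non-degeneracy of mechanism variability: There exist a probability space and Bool-valued random variables X¹, Y¹, X², Y² whose joint law admits a mechanism-variability X→Y representation (with E = F = Bool), yet X¹ is not conditionally independent of Y² given Y¹. Consequently this joint law admits no Y→X representation. -/
open MeasureTheory ProbabilityTheory

/-! Let `ψ, X¹, X²` be independent fair coins and `Yⁱ = ψ || Xⁱ`: the mechanism is `Y := X` or
`Y := true` according to `ψ`, a mechanism-variability representation with deterministic kernel.
Given `Y¹ = true`, the events `X¹ = false` and `Y² = false` have conditional probabilities `1/3`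
and `1/6` but are disjoint (`X¹ = false` forces `ψ = true`), so `X¹` and `Y²` are not
conditionally independent. In a `Y → X` representation the law of `(X¹, Y¹, Y²)` at `Y¹ = y`
factorises as `a(X¹, y) * b(y, Y²)`, so the table `8 * P(X¹ = x, Y¹ = true, Y² = z)`, which is
`[[0, 2], [1, 3]]`, would have rank one. -/

open scoped ENNReal

section MechanismVariability

lemma MeasureTheory.Measure.bind_map_eq_map_prod {Ψ E G : Type*} [MeasurableSpace Ψ]
    [MeasurableSpace E] [MeasurableSpace G] (ν : Measure Ψ) [SFinite ν] (ρ : Measure E) [SFinite ρ]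
    {H : Ψ × E → G} (hH : Measurable H) :
    ν.bind (fun ψ => ρ.map fun e => H (ψ, e)) = (ν.prod ρ).map H := by
  have hκ : (fun ψ => ρ.map fun e => H (ψ, e)) = ⇑((Kernel.id ×ₖ Kernel.const Ψ ρ).map H) := by
    funext ψ
    rw [Kernel.map_apply _ hH, Kernel.prod_apply, Kernel.id_apply, Kernel.const_apply,
      Measure.dirac_prod, Measure.map_map hH measurable_prodMk_left]
    rfl
  rw [hκ, ← Measure.compProd_const, Measure.compProd_eq_comp_prod, Measure.map_comp _ _ hH]

variable {E F : Type*} [MeasurableSpace E] [MeasurableSpace F]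

lemma jointXY_dirac (m : Measure E) {g : E → F} (hg : Measurable g) :
    jointXY m (fun x => Measure.dirac (g x)) = m.map fun x => (x, g x) := by
  simp_rw [jointXY, Measure.map_dirac' measurable_prodMk_left]
  exact Measure.bind_dirac_eq_map m (measurable_id.prodMk hg)

theorem hasMechVarRep_of_deterministic {Ψ : Type} [MeasurableSpace Ψ] (ν : Measure Ψ)
    [IsProbabilityMeasure ν] (π : Measure E) [IsProbabilityMeasure π] {f : Ψ × E → F}
    (hf : Measurable f) :
    HasMechVarRep (ν.prod (π.prod π)) (fun ω => ω.2.1) (fun ω => f (ω.1, ω.2.1))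
      (fun ω => ω.2.2) (fun ω => f (ω.1, ω.2.2)) := by
  refine ⟨Ψ, inferInstance, ν, inferInstance, π, inferInstance, Kernel.deterministic f hf,
    inferInstance, ?_⟩
  have hJ : ∀ ψ, (jointXY π fun x => Kernel.deterministic f hf (ψ, x)).prod
      (jointXY π fun x => Kernel.deterministic f hf (ψ, x)) =
      (π.prod π).map fun e => ((e.1, f (ψ, e.1)), (e.2, f (ψ, e.2))) := fun ψ => by
    have hg : Measurable fun x => f (ψ, x) := hf.comp measurable_prodMk_left
    simp_rw [Kernel.deterministic_apply, jointXY_dirac _ hg]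
    exact Measure.map_prod_map _ _ (by fun_prop) (by fun_prop)
  simp_rw [hJ]
  exact (Measure.bind_map_eq_map_prod ν (π.prod π)
    (H := fun p => ((p.2.1, f (p.1, p.2.1)), (p.2.2, f (p.1, p.2.2)))) (by fun_prop)).symm

end MechanismVariability

section ReverseRepresentation

variable {γ E F : Type*} [MeasurableSpace γ] [MeasurableSpace E] [MeasurableSpace F]

lemma jointYX_eq_map_swap_compProd_s7 (κ : Kernel γ F) [IsSFiniteKernel κ] (η : Kernel (γ × F) E)
    [IsSFiniteKernel η] (a : γ) :
    jointYX (κ a) (fun y => η (a, y)) = ((κ ⊗ₖ η) a).map Prod.swap := by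
  have hκ : (fun y => (η (a, y)).map fun x => (x, y)) =
      ⇑(η.comap (Prod.mk a) measurable_prodMk_left ×ₖ Kernel.id) := by
    funext y
    rw [Kernel.prod_apply, Kernel.comap_apply, Kernel.id_apply, Measure.prod_dirac]
  ext s hs
  rw [jointYX, Measure.bind_apply hs (hκ ▸ (Kernel.measurable _).aemeasurable),
    Measure.map_apply measurable_swap hs, Kernel.compProd_apply (measurable_swap hs)]
  refine lintegral_congr fun y => ?_
  rw [Measure.map_apply measurable_prodMk_right hs]
  rfl

variable {T Ψ : Type*} [MeasurableSpace T] [MeasurableSpace Ψ]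

noncomputable def jointYXKernel (β : Kernel Ψ F) (α : Kernel (T × F) E) :
    Kernel (T × Ψ) (E × F) :=
  (β.comap Prod.snd measurable_snd ⊗ₖ α.comap (fun q => (q.1.1, q.2)) (by fun_prop)).map
    Prod.swap

variable (β : Kernel Ψ F) [IsMarkovKernel β] (α : Kernel (T × F) E) [IsMarkovKernel α]

instance : IsMarkovKernel (jointYXKernel β α) :=
  Kernel.IsMarkovKernel.map _ measurable_swap

lemma jointYXKernel_apply (p : T × Ψ) :
    jointYXKernel β α p = jointYX (β p.2) fun y => α (p.1, y) := by
  rw [jointYXKernel, Kernel.map_apply _ measurable_swap, ← jointYX_eq_map_swap_compProd_s7]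
  simp only [Kernel.comap_apply]

lemma jointYXKernel_apply_univ_prod (p : T × Ψ) {C : Set F} (hC : MeasurableSet C) :
    jointYXKernel β α p (Set.univ ×ˢ C) = β p.2 C := by
  rw [jointYXKernel, Kernel.map_apply' _ measurable_swap _ (MeasurableSet.univ.prod hC),
    Set.preimage_swap_prod, Kernel.compProd_apply_prod hC MeasurableSet.univ]
  simp

variable [MeasurableSingletonClass F]

lemma jointYXKernel_apply_prod_singleton (p : T × Ψ) {A : Set E} (hA : MeasurableSet A)
    (y : F) :
    jointYXKernel β α p (A ×ˢ {y}) = α (p.1, y) A * β p.2 {y} := by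
  rw [jointYXKernel, Kernel.map_apply' _ measurable_swap _ (hA.prod (measurableSet_singleton y)),
    Set.preimage_swap_prod, Kernel.compProd_apply_prod (measurableSet_singleton y) hA,
    lintegral_singleton]
  rfl

lemma bind_jointYX_prod_apply (μ : Measure T) [SFinite μ] (ν : Measure Ψ) [SFinite ν]
    {A : Set E} (hA : MeasurableSet A) (y : F) {C : Set F} (hC : MeasurableSet C) :
    ((μ.prod ν).bind fun p =>
        (jointYX (β p.2) fun y => α (p.1, y)).prod (jointYX (β p.2) fun y => α (p.1, y)))
      ((A ×ˢ {y}) ×ˢ (Set.univ ×ˢ C)) =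
      (∫⁻ θ, α (θ, y) A ∂μ) * ∫⁻ ψ, β ψ {y} * β ψ C ∂ν := by
  have hK : (fun p : T × Ψ => (jointYX (β p.2) fun y => α (p.1, y)).prod
      (jointYX (β p.2) fun y => α (p.1, y))) = ⇑(jointYXKernel β α ×ₖ jointYXKernel β α) := by
    funext p
    rw [Kernel.prod_apply, jointYXKernel_apply]
  rw [hK, Measure.bind_apply ((hA.prod (measurableSet_singleton y)).prod
    (MeasurableSet.univ.prod hC)) (Kernel.measurable _).aemeasurable]
  simp_rw [Kernel.prod_apply, Measure.prod_prod, jointYXKernel_apply_prod_singleton _ _ _ hA,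
    jointYXKernel_apply_univ_prod _ _ _ hC, mul_assoc]
  exact lintegral_prod_mul ((α.measurable_coe hA).comp measurable_prodMk_right).aemeasurable
    ((β.measurable_coe (measurableSet_singleton y)).mul (β.measurable_coe hC)).aemeasurable

end ReverseRepresentation

theorem HasRevRep.measure_inter_mul_comm {Ω E F : Type*} [MeasurableSpace Ω] [MeasurableSpace E]
    [MeasurableSpace F] [MeasurableSingletonClass F] {P : Measure Ω} {X1 X2 : Ω → E}
    {Y1 Y2 : Ω → F} (hX1 : Measurable X1) (hY1 : Measurable Y1) (hX2 : Measurable X2)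
    (hY2 : Measurable Y2) (h : HasRevRep P X1 Y1 X2 Y2) (y : F) {A A' : Set E} {C C' : Set F}
    (hA : MeasurableSet A) (hA' : MeasurableSet A') (hC : MeasurableSet C)
    (hC' : MeasurableSet C') :
    P (Y1 ⁻¹' {y} ∩ X1 ⁻¹' A ∩ Y2 ⁻¹' C) * P (Y1 ⁻¹' {y} ∩ X1 ⁻¹' A' ∩ Y2 ⁻¹' C') =
      P (Y1 ⁻¹' {y} ∩ X1 ⁻¹' A ∩ Y2 ⁻¹' C') * P (Y1 ⁻¹' {y} ∩ X1 ⁻¹' A' ∩ Y2 ⁻¹' C) := by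
  obtain ⟨T, _, Ψ, _, μ, _, ν, _, β, _, α, _, hlaw⟩ := h
  have hfactor : ∀ {A : Set E} {C : Set F}, MeasurableSet A → MeasurableSet C →
      P (Y1 ⁻¹' {y} ∩ X1 ⁻¹' A ∩ Y2 ⁻¹' C) =
        (∫⁻ θ, α (θ, y) A ∂μ) * ∫⁻ ψ, β ψ {y} * β ψ C ∂ν := fun {A C} hA hC => by
    rw [← bind_jointYX_prod_apply β α μ ν hA y hC, ← hlaw, quadLaw,
      Measure.map_apply (by fun_prop) ((hA.prod (measurableSet_singleton y)).prod
        (MeasurableSet.univ.prod hC))]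
    congr 1
    ext ω
    simp only [Set.mem_inter_iff, Set.mem_preimage, Set.mem_prod, Set.mem_univ, true_and]
    tauto
  rw [hfactor hA hC, hfactor hA' hC', hfactor hA hC', hfactor hA' hC]
  ring

section CondIndep

variable {Ω β δ : Type*} [MeasurableSpace Ω] [MeasurableSpace β] [StandardBorelSpace β]
  [Nonempty β] [MeasurableSpace δ] [MeasurableSingletonClass δ] {P : Measure Ω} [IsFiniteMeasure P]
  {C : Ω → δ}

lemma measure_inter_preimage_eq_condDistrib_mul {X : Ω → β} (hX : Measurable X)
    (hC : Measurable C) (c : δ) {s : Set β} (hs : MeasurableSet s) :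
    P (C ⁻¹' {c} ∩ X ⁻¹' s) = condDistrib X C P c s * P (C ⁻¹' {c}) := by
  rw [← Set.mk_preimage_prod, ← Measure.map_apply (hC.prodMk hX)
    ((measurableSet_singleton c).prod hs), ← compProd_map_condDistrib hX.aemeasurable,
    Measure.compProd_apply_prod (measurableSet_singleton c) hs, lintegral_singleton,
    Measure.map_apply hC (measurableSet_singleton c)]

theorem CondIndepRV.measure_inter_mul [StandardBorelSpace Ω] {γ : Type*} [MeasurableSpace γ]
    [StandardBorelSpace γ] [Nonempty γ] {A : Ω → β} {B : Ω → γ} (hA : Measurable A)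
    (hB : Measurable B) {hC : Measurable C} (h : CondIndepRV P A B C hC) (c : δ) {s : Set β}
    {t : Set γ} (hs : MeasurableSet s) (ht : MeasurableSet t) :
    P (C ⁻¹' {c}) * P (C ⁻¹' {c} ∩ A ⁻¹' s ∩ B ⁻¹' t) =
      P (C ⁻¹' {c} ∩ A ⁻¹' s) * P (C ⁻¹' {c} ∩ B ⁻¹' t) := by
  have hlaw := (condIndepFun_iff_map_prod_eq_prod_condDistrib_prod_condDistrib hA hB hC).1 h
  rw [← Measure.compProd_eq_comp_prod] at hlaw
  have hjoint : P (C ⁻¹' {c} ∩ A ⁻¹' s ∩ B ⁻¹' t) =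
      condDistrib A C P c s * condDistrib B C P c t * P (C ⁻¹' {c}) := by
    rw [Set.inter_assoc, ← Set.mk_preimage_prod, ← Set.mk_preimage_prod,
      ← Measure.map_apply (by fun_prop) ((measurableSet_singleton c).prod (hs.prod ht)), hlaw,
      Measure.compProd_apply_prod (measurableSet_singleton c) (hs.prod ht), lintegral_singleton,
      Kernel.prod_apply, Measure.prod_prod, Measure.map_apply hC (measurableSet_singleton c)]
  rw [hjoint, measure_inter_preimage_eq_condDistrib_mul hA hC c hs,
    measure_inter_preimage_eq_condDistrib_mul hB hC c ht]
  ring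

end CondIndep

section Example

open Finset

noncomputable def fairCoin : Measure Bool := (PMF.uniformOfFintype Bool).toMeasure

instance : IsProbabilityMeasure fairCoin := by
  unfold fairCoin
  infer_instance

noncomputable def coinTriple : Measure (Bool × Bool × Bool) :=
  fairCoin.prod (fairCoin.prod fairCoin)

instance : IsProbabilityMeasure coinTriple := by
  unfold coinTriple
  infer_instance

lemma coinTriple_eq_smul_count : coinTriple = (8 : ℝ≥0∞)⁻¹ • Measure.count := by
  refine Measure.ext_of_singleton fun ⟨a, b, c⟩ => ?_
  have hcoin : ∀ x : Bool, fairCoin {x} = 2⁻¹ := fun x => by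
    simp [fairCoin, PMF.uniformOfFintype_apply]
  rw [Measure.smul_apply, Measure.count_singleton, smul_eq_mul, mul_one, coinTriple,
    ← Set.singleton_prod_singleton, ← Set.singleton_prod_singleton, Measure.prod_prod,
    Measure.prod_prod, hcoin, hcoin, hcoin, ← ENNReal.mul_inv (by simp) (by simp),
    ← ENNReal.mul_inv (by simp) (by simp)]
  norm_num

open Classical in
lemma coinTriple_apply (S : Set (Bool × Bool × Bool)) :
    coinTriple S = 8⁻¹ * #{ω | ω ∈ S} := by
  rw [coinTriple_eq_smul_count, Measure.smul_apply, smul_eq_mul, ← Measure.count_apply_finset]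
  simp

end Example

/-- **Non-degeneracy of mechanism variability.** There exist a probability space and
Bool-valued random variables `X¹, Y¹, X², Y²` whose joint law admits a mechanism-variability
`X → Y` representation, yet `X¹` is not conditionally independent of `Y²` given `Y¹`;
consequently, this joint law admits no `Y → X` representation. -/
theorem exists_mechVarRep_not_condIndep :
    ∃ (Ω : Type) (mΩ : MeasurableSpace Ω), letI := mΩ;
    ∃ (_ : StandardBorelSpace Ω) (P : Measure Ω) (hP : IsProbabilityMeasure P), letI := hP;
    ∃ (X1 Y1 X2 Y2 : Ω → Bool) (_ : Measurable X1) (hY1 : Measurable Y1)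
      (_ : Measurable X2) (_ : Measurable Y2),
      HasMechVarRep P X1 Y1 X2 Y2 ∧
      ¬ CondIndepRV P X1 Y2 Y1 hY1 ∧
      ¬ HasRevRep P X1 Y1 X2 Y2 := by
  have hmeas : ∀ g : Bool × Bool × Bool → Bool, Measurable g := fun _ => .of_discrete
  refine ⟨Bool × Bool × Bool, inferInstance, inferInstance, coinTriple, inferInstance,
    fun ω => ω.2.1, fun ω => ω.1 || ω.2.1, fun ω => ω.2.2, fun ω => ω.1 || ω.2.2,
    hmeas _, hmeas _, hmeas _, hmeas _,
    hasMechVarRep_of_deterministic fairCoin fairCoin (f := fun p => p.1 || p.2) .of_discrete,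
    fun h => ?_, fun h => ?_⟩
  · have := h.measure_inter_mul (hmeas _) (hmeas _) true (measurableSet_singleton false)
      (measurableSet_singleton false)
    simp only [coinTriple_apply, Finset.card_filter, Fintype.sum_prod_type,
      Fintype.sum_bool] at this
    norm_num at this
  · have := h.measure_inter_mul_comm (hmeas _) (hmeas _) (hmeas _) (hmeas _) true
      (measurableSet_singleton true) (measurableSet_singleton false)
      (measurableSet_singleton false) (measurableSet_singleton true)
    simp only [coinTriple_apply, Finset.card_filter, Fintype.sum_prod_type,
      Fintype.sum_bool] at this
    norm_num at this
end

section
/- Conditional independence in the bivariate Causal de Finetti model: Let μ be a probability measure on [0,1] and ν a probability measure on [0,1] × [0,1]. Let {(X_n, Y_n)}_{n∈ℕ} be a sequence of pairs of {0,1}-valued random variables such that for every n and all x_1, y_1, …, x_n, y_n ∈ {0,1}: P(X_1 = x_1, Y_1 = y_1, …, X_n = x_n, Y_n = y_n) = ∫∫ ∏_{i=1}^n ψ(x_i)^{y_i} (1 − ψ(x_i))^{1 − y_i} · θ^{x_i} (1 − θ)^{1 − x_i} dν(ψ) dμ(θ), where ψ(0), ψ(1) denote the two coordinates of ψ ∈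 [0,1]². Then for every n, the random vector (Y_1, …, Y_n) is conditionally independent of X_{n+1} given (X_1, …, X_n). -/
open MeasureTheory ProbabilityTheory

/-- Bernoulli weight: `bern p b = p` if `b` and `1 - p` otherwise. -/
noncomputable def bern (p : ℝ) (b : Bool) : ℝ := if b then p else 1 - p

/-- The de Finetti representation of the bivariate Causal de Finetti model: there are
probability measures `μ` on `[0,1]` and `ν` on `[0,1]²` such that all finite-dimensional
probabilities are the corresponding mixtures of i.i.d. Bernoulli laws, where `X` has
parameter `θ` and `Y` given `X = x` has parameter `ψ x`. -/
def CdFRep {Ω : Type*} [MeasurableSpace Ω] (P : Measure Ω) (X Y : ℕ → Ω → Bool) : Prop :=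
  ∃ (μ : Measure (Set.Icc (0:ℝ) 1)) (_ : IsProbabilityMeasure μ)
    (ν : Measure (Set.Icc (0:ℝ) 1 × Set.Icc (0:ℝ) 1)) (_ : IsProbabilityMeasure ν),
    ∀ (n : ℕ) (x y : Fin n → Bool),
      (P {ω | ∀ i : Fin n, X i.1 ω = x i ∧ Y i.1 ω = y i}).toReal =
        ∫ θ : Set.Icc (0:ℝ) 1,
          (∫ ψ : Set.Icc (0:ℝ) 1 × Set.Icc (0:ℝ) 1,
            (∏ i : Fin n,
              bern (if x i then (ψ.2 : ℝ) else (ψ.1 : ℝ)) (y i) * bern (θ : ℝ) (x i)) ∂ν) ∂μ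

/-!
Given `(X₁, …, Xₙ) = x`, the weight of `(Y₁, …, Yₙ) = y, X_{n+1} = b` is, after summing out
`Y_{n+1}` (whose Bernoulli weights add up to one), `(∫ ∏ᵢ ψ-weights dν) · (∫ θ-weights dμ)`:
the first factor depends only on `(x, y)` and the second only on `(x, b)`. Given a discrete
variable, a joint law of product form on each fibre is conditional independence, because the
conditional expectation given that variable is the elementary conditional probability.
-/

section ConditionalIndependence

variable {Ω γ β β' : Type*} [MeasurableSpace Ω] [MeasurableSpace γ] [MeasurableSpace β]
  [MeasurableSpace β'] {f : Ω → β} {g : Ω → β'}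

lemma measureReal_eq_sum_inter_preimage_singleton [Fintype β] [MeasurableSingletonClass β]
    (μ : Measure Ω) [IsFiniteMeasure μ] (hf : Measurable f) (A : Set Ω) :
    μ.real A = ∑ a, μ.real (A ∩ f ⁻¹' {a}) := by
  have h := sum_measureReal_preimage_singleton (μ := μ.restrict A) Finset.univ
    (fun a _ => hf (measurableSet_singleton a))
  simp only [measureReal_restrict_apply (hf (measurableSet_singleton _)), Finset.coe_univ,
    Set.preimage_univ, measureReal_restrict_apply MeasurableSet.univ, Set.univ_inter] at h
  simp_rw [h.symm, Set.inter_comm]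

lemma indepFun_of_measure_inter_preimage_singleton_eq_mul [Countable β] [Countable β']
    [MeasurableSingletonClass β] [MeasurableSingletonClass β'] {μ : Measure Ω} [IsFiniteMeasure μ]
    (hf : Measurable f) (hg : Measurable g)
    (h : ∀ a b, μ (f ⁻¹' {a} ∩ g ⁻¹' {b}) = μ (f ⁻¹' {a}) * μ (g ⁻¹' {b})) :
    IndepFun f g μ := by
  rw [indepFun_iff_map_prod_eq_prod_map_map hf.aemeasurable hg.aemeasurable,
    Measure.ext_iff_singleton]
  rintro ⟨a, b⟩
  have ha := measurableSet_singleton a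
  have hb := measurableSet_singleton b
  rw [← Set.singleton_prod_singleton, Measure.prod_prod, Measure.map_apply (hf.prodMk hg)
    (ha.prod hb), Measure.map_apply hf ha, Measure.map_apply hg hb]
  exact h a b

lemma indepFun_of_measureReal_inter_preimage_singleton_eq_mul [Fintype β] [Fintype β']
    [MeasurableSingletonClass β] [MeasurableSingletonClass β'] {μ : Measure Ω}
    [IsProbabilityMeasure μ] (hf : Measurable f) (hg : Measurable g) (φ : β → ℝ) (χ : β' → ℝ)
    (h : ∀ a b, μ.real (f ⁻¹' {a} ∩ g ⁻¹' {b}) = φ a * χ b) :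
    IndepFun f g μ := by
  have hf_marginal : ∀ a, μ.real (f ⁻¹' {a}) = φ a * ∑ b, χ b := fun a => by
    rw [measureReal_eq_sum_inter_preimage_singleton μ hg, Finset.mul_sum]
    simp_rw [h]
  have hg_marginal : ∀ b, μ.real (g ⁻¹' {b}) = (∑ a, φ a) * χ b := fun b => by
    rw [measureReal_eq_sum_inter_preimage_singleton μ hf, Finset.sum_mul]
    simp_rw [Set.inter_comm, h]
  have htotal : (∑ a, φ a) * ∑ b, χ b = 1 := by
    rw [← probReal_univ (μ := μ), measureReal_eq_sum_inter_preimage_singleton μ hf,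
      Finset.sum_mul]
    simp_rw [Set.univ_inter, hf_marginal]
  refine indepFun_of_measure_inter_preimage_singleton_eq_mul hf hg fun a b => ?_
  rw [← ENNReal.toReal_eq_toReal_iff' (by finiteness) (by finiteness), ENNReal.toReal_mul,
    ← measureReal_def, ← measureReal_def, ← measureReal_def, h, hf_marginal, hg_marginal]
  linear_combination φ a * χ b * htotal.symm

lemma cond_real_apply {μ : Measure Ω} {s : Set Ω} (hs : MeasurableSet s) (t : Set Ω) :
    μ[|s].real t = (μ.real s)⁻¹ * μ.real (s ∩ t) := by
  rw [measureReal_def, cond_apply hs, ENNReal.toReal_mul, ENNReal.toReal_inv, measureReal_def,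
    measureReal_def]

lemma ae_measure_preimage_singleton_ne_zero [Countable γ] [MeasurableSingletonClass γ]
    (P : Measure Ω) {Z : Ω → γ} (hZ : Measurable Z) : ∀ᵐ ω ∂P, P (Z ⁻¹' {Z ω}) ≠ 0 := by
  have h : ∀ᵐ v ∂P.map Z, P.map Z {v} ≠ 0 := ae_iff_of_countable.2 fun _ hv => hv
  filter_upwards [ae_of_ae_map hZ.aemeasurable h] with ω hω
  rwa [Measure.map_apply hZ (measurableSet_singleton _)] at hω

lemma condExp_comap_ae_eq_cond [StandardBorelSpace Ω] [Nonempty Ω] [Countable γ]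
    [MeasurableSingletonClass γ] (P : Measure Ω) [IsFiniteMeasure P] {Z : Ω → γ}
    (hZ : Measurable Z) {A : Set Ω} (hA : MeasurableSet A) :
    P⟦A | MeasurableSpace.comap Z ‹_›⟧ =ᵐ[P] fun ω => P[|Z ⁻¹' {Z ω}].real A := by
  filter_upwards [condDistrib_ae_eq_condExp hZ measurable_id hA,
    ae_measure_preimage_singleton_ne_zero P hZ] with ω hcond hfiber
  have hv := measurableSet_singleton (Z ω)
  rw [Set.preimage_id] at hcond
  rw [← hcond, measureReal_def, measureReal_def,
    condDistrib_apply_of_ne_zero measurable_id _ (by rwa [Measure.map_apply hZ hv]),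
    Measure.map_apply hZ hv, Measure.map_apply (hZ.prodMk measurable_id) (hv.prod hA),
    cond_apply (hZ hv)]
  rfl

lemma condIndepFun_comap_of_forall_indepFun_cond [StandardBorelSpace Ω] [Nonempty Ω]
    [Countable γ] [MeasurableSingletonClass γ] (P : Measure Ω) [IsFiniteMeasure P] {Z : Ω → γ}
    (hZ : Measurable Z) (hf : Measurable f) (hg : Measurable g)
    (h : ∀ v, P (Z ⁻¹' {v}) ≠ 0 → IndepFun f g P[|Z ⁻¹' {v}]) :
    CondIndepFun (MeasurableSpace.comap Z ‹_›) hZ.comap_le f g P := by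
  rw [condIndepFun_iff_condExp_inter_preimage_eq_mul hf hg]
  intro s t hs ht
  filter_upwards [condExp_comap_ae_eq_cond P hZ ((hf hs).inter (hg ht)),
    condExp_comap_ae_eq_cond P hZ (hf hs), condExp_comap_ae_eq_cond P hZ (hg ht),
    ae_measure_preimage_singleton_ne_zero P hZ] with ω hst hs' ht' hfiber
  rw [hst, hs', ht', measureReal_def, (h _ hfiber).measure_inter_preimage_eq_mul s t hs ht,
    ENNReal.toReal_mul, measureReal_def, measureReal_def]

lemma condIndepFun_comap_of_measureReal_inter_preimage_singleton_eq_mul [StandardBorelSpace Ω]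
    [Nonempty Ω] [Countable γ] [MeasurableSingletonClass γ] [Fintype β] [Fintype β']
    [MeasurableSingletonClass β] [MeasurableSingletonClass β'] (P : Measure Ω)
    [IsFiniteMeasure P] {Z : Ω → γ} (hZ : Measurable Z) (hf : Measurable f) (hg : Measurable g)
    (φ : γ → β → ℝ) (χ : γ → β' → ℝ)
    (h : ∀ v a b, P.real (Z ⁻¹' {v} ∩ f ⁻¹' {a} ∩ g ⁻¹' {b}) = φ v a * χ v b) :
    CondIndepFun (MeasurableSpace.comap Z ‹_›) hZ.comap_le f g P := by
  refine condIndepFun_comap_of_forall_indepFun_cond P hZ hf hg fun v hv => ?_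
  have := cond_isProbabilityMeasure hv
  refine indepFun_of_measureReal_inter_preimage_singleton_eq_mul hf hg
    (fun a => (P.real (Z ⁻¹' {v}))⁻¹ * φ v a) (χ v) fun a b => ?_
  rw [cond_real_apply (hZ (measurableSet_singleton v)), ← Set.inter_assoc, h, mul_assoc]

end ConditionalIndependence

local notation "𝕀" => Set.Icc (0 : ℝ) 1

lemma Continuous.bern {α : Type*} [TopologicalSpace α] {f : α → ℝ} (hf : Continuous f)
    (b : Bool) : Continuous fun a => bern (f a) b :=
  continuous_if_const _ (fun _ => hf) (fun _ => continuous_const.sub hf)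

lemma sum_bern (p : ℝ) : ∑ b, bern p b = 1 := by
  simp [bern]

section CdFModel

variable {Ω : Type*}

def pairCylinder (X Y : ℕ → Ω → Bool) (n : ℕ) (x y : Fin n → Bool) : Set Ω :=
  {ω | ∀ i : Fin n, X i.1 ω = x i ∧ Y i.1 ω = y i}

lemma pairCylinder_eq_preimage_inter_preimage (X Y : ℕ → Ω → Bool) (n : ℕ) (x y : Fin n → Bool) :
    pairCylinder X Y n x y =
      (fun ω (i : Fin n) => X i.1 ω) ⁻¹' {x} ∩ (fun ω (i : Fin n) => Y i.1 ω) ⁻¹' {y} := by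
  ext ω
  simp [pairCylinder, funext_iff, forall_and]

lemma pairCylinder_snoc (X Y : ℕ → Ω → Bool) (n : ℕ) (x y : Fin n → Bool) (b c : Bool) :
    pairCylinder X Y (n + 1) (Fin.snoc x b) (Fin.snoc y c) =
      pairCylinder X Y n x y ∩ X n ⁻¹' {b} ∩ Y n ⁻¹' {c} := by
  ext ω
  simp only [pairCylinder, Fin.forall_fin_succ', Fin.snoc_castSucc, Fin.snoc_last, Fin.val_castSucc,
    Fin.val_last, Set.mem_ofPred_eq, Set.mem_inter_iff, Set.mem_preimage, Set.mem_singleton_iff]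
  tauto

variable [MeasurableSpace Ω]

noncomputable def causeWeight (μ : Measure 𝕀) {n : ℕ} (x : Fin n → Bool) : ℝ :=
  ∫ θ, ∏ i, bern θ (x i) ∂μ

noncomputable def effectWeight (ν : Measure (𝕀 × 𝕀)) {n : ℕ} (x y : Fin n → Bool) : ℝ :=
  ∫ ψ, ∏ i, bern (if x i then (ψ.2 : ℝ) else ψ.1) (y i) ∂ν

def HasCdFMixture (P : Measure Ω) (X Y : ℕ → Ω → Bool) (μ : Measure 𝕀)
    (ν : Measure (𝕀 × 𝕀)) : Prop :=
  ∀ (n : ℕ) (x y : Fin n → Bool), P.real (pairCylinder X Y n x y) =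
    ∫ θ, ∫ ψ, ∏ i, bern (if x i then (ψ.2 : ℝ) else ψ.1) (y i) * bern θ (x i) ∂ν ∂μ

lemma continuous_prod_bern_coord {m : ℕ} (x y : Fin m → Bool) :
    Continuous fun ψ : 𝕀 × 𝕀 => ∏ i, bern (if x i then (ψ.2 : ℝ) else ψ.1) (y i) :=
  continuous_finsetProd _ fun i _ =>
    (continuous_if_const _ (fun _ => by fun_prop) (fun _ => by fun_prop)).bern (y i)

lemma sum_effectWeight_snoc (ν : Measure (𝕀 × 𝕀)) [IsProbabilityMeasure ν] {n : ℕ}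
    (x y : Fin n → Bool) (b : Bool) :
    ∑ c, effectWeight ν (Fin.snoc x b) (Fin.snoc y c) = effectWeight ν x y := by
  simp only [effectWeight]
  rw [← integral_finsetSum _ fun c _ =>
    (continuous_prod_bern_coord _ _).integrable_of_hasCompactSupport (.of_compactSpace _)]
  congr 1 with ψ
  simp_rw [Fin.prod_univ_castSucc, Fin.snoc_castSucc, Fin.snoc_last, ← Finset.mul_sum, sum_bern,
    mul_one]

section
variable {P : Measure Ω} {X Y : ℕ → Ω → Bool} {μ : Measure 𝕀} {ν : Measure (𝕀 × 𝕀)}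

lemma HasCdFMixture.measureReal_pairCylinder (h : HasCdFMixture P X Y μ ν) {n : ℕ}
    (x y : Fin n → Bool) :
    P.real (pairCylinder X Y n x y) = effectWeight ν x y * causeWeight μ x := by
  rw [h n x y, effectWeight, causeWeight]
  simp_rw [Finset.prod_mul_distrib, integral_mul_const, integral_const_mul]

lemma HasCdFMixture.measureReal_pairCylinder_inter_preimage [IsFiniteMeasure P]
    [IsProbabilityMeasure ν] (h : HasCdFMixture P X Y μ ν) {n : ℕ} (hY : Measurable (Y n))
    (x y : Fin n → Bool) (b : Bool) :
    P.real (pairCylinder X Y n x y ∩ X n ⁻¹' {b}) =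
      effectWeight ν x y * causeWeight μ (Fin.snoc x b) := by
  rw [measureReal_eq_sum_inter_preimage_singleton P hY]
  simp_rw [← pairCylinder_snoc, h.measureReal_pairCylinder, ← Finset.sum_mul,
    sum_effectWeight_snoc]

end

end CdFModel

/-- **Conditional independence in the bivariate Causal de Finetti model.** If the law of the
sequence `{(Xₙ, Yₙ)}` of pairs of Bool-valued random variables admits the bivariate Causal
de Finetti mixture representation, then for every `n` the random vector `(Y₁, …, Yₙ)` is
conditionally independent of `X_{n+1}` given `(X₁, …, Xₙ)`. -/
theorem cdfRep_condIndep {Ω : Type*} [MeasurableSpace Ω] [StandardBorelSpace Ω]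
    (P : Measure Ω) [IsProbabilityMeasure P]
    (X Y : ℕ → Ω → Bool) (hX : ∀ n, Measurable (X n)) (hY : ∀ n, Measurable (Y n))
    (hrep : CdFRep P X Y) :
    ∀ n : ℕ,
      CondIndepFun
        (MeasurableSpace.comap (fun ω (i : Fin n) => X i.1 ω) inferInstance)
        (Measurable.comap_le (measurable_pi_iff.mpr fun i => hX i.1))
        (fun ω (i : Fin n) => Y i.1 ω) (X n) P := by
  obtain ⟨μ, _, ν, _, hP⟩ := hrep
  have hmix : HasCdFMixture P X Y μ ν := hP
  have := nonempty_of_isProbabilityMeasure P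
  intro n
  have hZ : Measurable fun ω (i : Fin n) => X i.1 ω := measurable_pi_iff.mpr fun i => hX i.1
  have hf : Measurable fun ω (i : Fin n) => Y i.1 ω := measurable_pi_iff.mpr fun i => hY i.1
  -- elaborated before meeting the goal: unifying `Z` with the goal's lambda times out
  have hcondIndep := condIndepFun_comap_of_measureReal_inter_preimage_singleton_eq_mul P hZ hf
    (hX n) (effectWeight ν) (fun x b => causeWeight μ (Fin.snoc x b)) fun x y b => by
      rw [← pairCylinder_eq_preimage_inter_preimage,
        hmix.measureReal_pairCylinder_inter_preimage (hY n)]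
  exact hcondIndep
end
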